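/- arXiv:1811.08994 — 6 statements merged into one kernel-verified Lean document; each statement's English description precedes it below -/
import Mathlib

section
/- Let n ≥ 2 and let G be the complete graph on n vertices with a loop at every vertex. Then there exists an integer p ≤ 10·log n (natural logarithm) and linear orderings <_1,…,<_p of the vertex set such that: (1) every pair of edges with no common endpoint are separated in some <_i; and (2) for every vertex v and distinct vertices u,w different from v, there exists i with u <_i v <_i w or w <_i v <_i u. -/
/-- Two edges `{v,w}` and `{x,y}` (possibly loops) with disjoint endpoint sets are
separated in the ordering given by `f` if all endpoints of one precede all endpoints
of the other. -/
def Separates {V : Type*} (f : V → ℕ) (v w x y : V) : Prop :=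
  (f v < f x ∧ f v < f y ∧ f w < f x ∧ f w < f y) ∨
  (f x < f v ∧ f x < f w ∧ f y < f v ∧ f y < f w)

/-!
Take `p = ⌊10 log n⌋` orderings, independently and uniformly at random. Every requirement
(two disjoint edges to be separated, or a vertex to lie between two others) involves at most
four vertices, and precomposing an ordering with a suitable 3-cycle of these vertices rotates
their positions so that at least one of the three rotations meets the requirement. Hence a
requirement fails in one random ordering with probability at most `2/3`. Counted up to symmetry
there are fewer than `(2/3) n⁴` requirements, and `(2/3) n⁴ (2/3)^p ≤ 1` because
`10 log (3/2) > 4`, so by the union bound some choice of orderings meets all of them.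
-/

open Finset Equiv Function

def IsBetween {V : Type*} (f : V → ℕ) (v u w : V) : Prop :=
  (f u < f v ∧ f v < f w) ∨ (f w < f v ∧ f v < f u)

section Symmetry

variable {V : Type*} {f : V → ℕ} {u v w x y : V}

lemma Separates.swap_left (h : Separates f u w x y) : Separates f w u x y := by
  unfold Separates at *; tauto

lemma Separates.swap_right (h : Separates f u w x y) : Separates f u w y x := by
  unfold Separates at *; tauto

lemma Separates.symm (h : Separates f u w x y) : Separates f x y u w := by
  unfold Separates at *; tauto

lemma IsBetween.symm (h : IsBetween f v u w) : IsBetween f v w u := by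
  unfold IsBetween at *; tauto

end Symmetry

section ThreeCycle

lemma exists_lt_three_comp_pow_of_or {α β : Type*} {P : (α → β) → Prop} {c : Perm α}
    {f : α → β} (h : P f ∨ P (f ∘ c) ∨ P (f ∘ ⇑(c * c))) : ∃ k < 3, P (f ∘ ⇑(c ^ k)) := by
  rcases h with h | h | h
  exacts [⟨0, by norm_num, h⟩, ⟨1, by norm_num, by simpa using h⟩, ⟨2, by norm_num, by rwa [sq]⟩]

variable {α : Type*} [DecidableEq α] {a b d u v w x y : α}

/-- The cycle `a ↦ b ↦ d ↦ a`. -/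
def threeCycle (a b d : α) : Perm α := swap a b * swap b d

lemma threeCycle_apply_left (hab : a ≠ b) (had : a ≠ d) : threeCycle a b d a = b := by
  simp [threeCycle, swap_apply_of_ne_of_ne hab had]

lemma threeCycle_apply_middle (hda : d ≠ a) (hdb : d ≠ b) : threeCycle a b d b = d := by
  simp [threeCycle, swap_apply_of_ne_of_ne hda hdb]

lemma threeCycle_apply_right : threeCycle a b d d = a := by
  simp [threeCycle]

lemma threeCycle_apply_of_ne (hxa : x ≠ a) (hxb : x ≠ b) (hxd : x ≠ d) :
    threeCycle a b d x = x := by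
  simp [threeCycle, swap_apply_of_ne_of_ne hxb hxd, swap_apply_of_ne_of_ne hxa hxb]

lemma exists_isBetween_comp_pow (huv : u ≠ v) (hwv : w ≠ v) (huw : u ≠ w) :
    ∃ c : Perm α, ∀ f : α → ℕ, Injective f → ∃ k < 3, IsBetween (f ∘ ⇑(c ^ k)) v u w := by
  refine ⟨threeCycle v u w, fun f hf =>
    exists_lt_three_comp_pow_of_or (P := fun g => IsBetween g v u w) ?_⟩
  have hv := threeCycle_apply_left huv.symm hwv.symm
  have hu := threeCycle_apply_middle hwv huw.symm
  have hw : threeCycle v u w w = v := threeCycle_apply_right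
  have := hf.ne huv; have := hf.ne hwv; have := hf.ne huw
  simp only [IsBetween, comp_apply, Perm.mul_apply, hv, hu, hw]
  omega

lemma exists_separates_loop_comp_pow (hux : u ≠ x) (hwx : w ≠ x) (huw : u ≠ w) :
    ∃ c : Perm α, ∀ f : α → ℕ, Injective f → ∃ k < 3, Separates (f ∘ ⇑(c ^ k)) u w x x := by
  refine ⟨threeCycle x u w, fun f hf =>
    exists_lt_three_comp_pow_of_or (P := fun g => Separates g u w x x) ?_⟩
  have hx := threeCycle_apply_left hux.symm hwx.symm
  have hu := threeCycle_apply_middle hwx huw.symm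
  have hw : threeCycle x u w w = x := threeCycle_apply_right
  have := hf.ne hux; have := hf.ne hwx; have := hf.ne huw
  simp only [Separates, comp_apply, Perm.mul_apply, hx, hu, hw]
  omega

lemma exists_separates_comp_pow (hux : u ≠ x) (huy : u ≠ y) (hwx : w ≠ x) (hwy : w ≠ y) :
    ∃ c : Perm α, ∀ f : α → ℕ, Injective f → ∃ k < 3, Separates (f ∘ ⇑(c ^ k)) u w x y := by
  obtain rfl | hxy := eq_or_ne x y
  · obtain rfl | huw := eq_or_ne u w
    · refine ⟨1, fun f hf => ⟨0, by norm_num, ?_⟩⟩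
      have := hf.ne hux
      simp only [Separates, pow_zero, Perm.coe_one, comp_id]
      omega
    · exact exists_separates_loop_comp_pow hux hwx huw
  obtain rfl | huw := eq_or_ne u w
  · obtain ⟨c, hc⟩ := exists_separates_loop_comp_pow hux.symm huy.symm hxy
    exact ⟨c, fun f hf => (hc f hf).imp fun _ hk => ⟨hk.1, hk.2.symm⟩⟩
  -- `w` stays put while its partner runs through `u`, `x`, `y`: each of the three
  -- matchings of the four values occurs once.
  refine ⟨threeCycle u x y, fun f hf =>
    exists_lt_three_comp_pow_of_or (P := fun g => Separates g u w x y) ?_⟩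
  have hu := threeCycle_apply_left hux huy
  have hx := threeCycle_apply_middle huy.symm hxy.symm
  have hy : threeCycle u x y y = u := threeCycle_apply_right
  have hw := threeCycle_apply_of_ne huw.symm hwx hwy
  have := hf.ne hux; have := hf.ne huy; have := hf.ne hwx; have := hf.ne hwy
  have := hf.ne hxy; have := hf.ne huw
  simp only [Separates, comp_apply, Perm.mul_apply, hu, hx, hy, hw]
  omega

end ThreeCycle

lemma card_le_mul_card_of_forall_exists_mul_pow_mem {G : Type*} [Group G] [Fintype G]
    [DecidableEq G] {S : Finset G} {c : G} {m : ℕ} (h : ∀ σ, ∃ k < m, σ * c ^ k ∈ S) :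
    Fintype.card G ≤ m * #S := by
  have hcover : (univ : Finset G) ⊆ (range m).biUnion fun k => S.image (· * (c ^ k)⁻¹) := by
    intro σ _
    obtain ⟨k, hk, hσ⟩ := h σ
    exact mem_biUnion.2 ⟨k, mem_range.2 hk, mem_image.2 ⟨_, hσ, mul_inv_cancel_right σ _⟩⟩
  calc Fintype.card G = #(univ : Finset G) := card_univ.symm
    _ ≤ ∑ k ∈ range m, #(S.image (· * (c ^ k)⁻¹)) := (card_le_card hcover).trans card_biUnion_le
    _ ≤ ∑ _k ∈ range m, #S := sum_le_sum fun _ _ => card_image_le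
    _ = m * #S := by rw [sum_const, card_range, smul_eq_mul]

lemma card_filter_not_le_of_exists_comp_pow {n : ℕ} (Q : (Fin n → ℕ) → Prop)
    [DecidablePred Q]
    (hQ : ∃ c : Perm (Fin n), ∀ f : Fin n → ℕ, Injective f → ∃ k < 3, Q (f ∘ ⇑(c ^ k))) :
    (#{σ : Perm (Fin n) | ¬ Q (Fin.val ∘ ⇑σ)} : ℝ) ≤ 2 / 3 * Fintype.card (Perm (Fin n)) := by
  obtain ⟨c, hc⟩ := hQ
  have hsplit := card_filter_add_card_filter_not (s := univ)
    (p := fun σ : Perm (Fin n) => Q (Fin.val ∘ ⇑σ))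
  have hgood : Fintype.card (Perm (Fin n)) ≤ 3 * #{σ : Perm (Fin n) | Q (Fin.val ∘ ⇑σ)} :=
    card_le_mul_card_of_forall_exists_mul_pow_mem fun σ => by
      obtain ⟨k, hk, hQk⟩ := hc _ (Fin.val_injective.comp σ.injective)
      exact ⟨k, hk, by simpa [Perm.coe_mul, comp_assoc] using hQk⟩
  rw [card_univ] at hsplit
  have hbad : (3 * #{σ : Perm (Fin n) | ¬ Q (Fin.val ∘ ⇑σ)} : ℝ) ≤
      2 * Fintype.card (Perm (Fin n)) := by
    exact_mod_cast (by omega : 3 * #{σ : Perm (Fin n) | ¬ Q (Fin.val ∘ ⇑σ)} ≤ _)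
  linarith

lemma exists_forall_exists_notMem_of_card_mul_pow_lt {Ω ι : Type*} [Fintype Ω] [Nonempty Ω]
    (E : Finset ι) (bad : ι → Finset Ω) {q : ℝ} {p : ℕ}
    (hbad : ∀ e ∈ E, (#(bad e) : ℝ) ≤ q * Fintype.card Ω) (hE : #E * q ^ p < 1) :
    ∃ F : Fin p → Ω, ∀ e ∈ E, ∃ i, F i ∉ bad e := by
  classical
  by_contra! hcon
  have hcover : (univ : Finset (Fin p → Ω)) ⊆ E.biUnion fun e => Fintype.piFinset fun _ => bad e :=
    fun F _ => by
      obtain ⟨e, he, hF⟩ := hcon F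
      exact mem_biUnion.2 ⟨e, he, Fintype.mem_piFinset.2 hF⟩
  have hN : (0 : ℝ) < (Fintype.card Ω : ℝ) ^ p := by positivity
  have hcount : (Fintype.card Ω : ℝ) ^ p ≤ #E * (q * Fintype.card Ω) ^ p :=
    calc (Fintype.card Ω : ℝ) ^ p = #(univ : Finset (Fin p → Ω)) := by simp
      _ ≤ ∑ e ∈ E, #(Fintype.piFinset fun _ : Fin p => bad e) := by
        exact_mod_cast (card_le_card hcover).trans card_biUnion_le
      _ = ∑ e ∈ E, (#(bad e) : ℝ) ^ p := by simp [Fintype.card_piFinset]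
      _ ≤ ∑ _e ∈ E, (q * Fintype.card Ω) ^ p :=
        sum_le_sum fun e he => pow_le_pow_left₀ (by positivity) (hbad e he) p
      _ = #E * (q * Fintype.card Ω) ^ p := by rw [sum_const, nsmul_eq_mul]
  rw [mul_pow, ← mul_assoc] at hcount
  nlinarith

lemma two_mul_card_filter_le_of_involutive {β : Type*} [DecidableEq β] {s : Finset β}
    {g : β → β} {P : β → Prop} [DecidablePred P] (hg : Involutive g)
    (hs : ∀ b ∈ s, g b ∈ s) (hP : ∀ b, P b → ¬ P (g b)) :
    2 * #(s.filter P) ≤ #s := by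
  have hdisj : Disjoint (s.filter P) ((s.filter P).image g) := by
    refine disjoint_left.2 fun b hb hb' => ?_
    obtain ⟨a, ha, rfl⟩ := mem_image.1 hb'
    exact hP a (mem_filter.1 ha).2 (mem_filter.1 hb).2
  have hsub : s.filter P ∪ (s.filter P).image g ⊆ s :=
    union_subset (filter_subset _ _) (image_subset_iff.2 fun b hb => hs b (mem_filter.1 hb).1)
  calc 2 * #(s.filter P) = #(s.filter P ∪ (s.filter P).image g) := by
        rw [card_union_of_disjoint hdisj, card_image_of_injective _ hg.injective, two_mul]
    _ ≤ #s := card_le_card hsub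

section Requirements

variable {n : ℕ}

def sortedPairs (n : ℕ) : Finset (Fin n × Fin n) := {e | e.1 ≤ e.2}

/-- One representative of each unordered pair of disjoint edges; the conditions
`q.1.1 ≠ q.2.1`, `q.1.1 ≠ q.2.2` follow from `q.1.1 < q.2.1 ≤ q.2.2`. -/
def edgePairs (n : ℕ) : Finset ((Fin n × Fin n) × (Fin n × Fin n)) :=
  (sortedPairs n ×ˢ sortedPairs n).filter fun q => q.1.1 < q.2.1 ∧ q.1.2 ≠ q.2.1 ∧ q.1.2 ≠ q.2.2

def betweenTriples (n : ℕ) : Finset (Fin n × Fin n × Fin n) :=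
  {t | t.2.1 < t.2.2 ∧ t.2.1 ≠ t.1 ∧ t.2.2 ≠ t.1}

abbrev Requirement (n : ℕ) : Type := (Fin n × Fin n) × (Fin n × Fin n) ⊕ Fin n × Fin n × Fin n

def Meets (f : Fin n → ℕ) : Requirement n → Prop :=
  Sum.elim (fun q => Separates f q.1.1 q.1.2 q.2.1 q.2.2) fun t => IsBetween f t.1 t.2.1 t.2.2

def requirements (n : ℕ) : Finset (Requirement n) := (edgePairs n).disjSum (betweenTriples n)

lemma two_mul_card_sortedPairs (n : ℕ) : 2 * #(sortedPairs n) = n ^ 2 + n := by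
  rw [sortedPairs, ← Fintype.card_subtype, ← Fintype.card_congr Sym2.sortEquiv, Sym2.card,
    Fintype.card_fin, Nat.choose_two_right, Nat.mul_div_cancel' (Nat.even_mul_pred_self _).two_dvd]
  simp only [add_tsub_cancel_right]
  ring

lemma eight_mul_card_edgePairs_le (n : ℕ) : 8 * #(edgePairs n) ≤ (n ^ 2 + n) ^ 2 := by
  have := two_mul_card_filter_le_of_involutive (s := sortedPairs n ×ˢ sortedPairs n)
    (P := fun q => q.1.1 < q.2.1 ∧ q.1.2 ≠ q.2.1 ∧ q.1.2 ≠ q.2.2) Prod.swap_swap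
    (fun q hq => mem_product.2 (mem_product.1 hq).symm) fun _ hq hq' => hq.1.not_gt hq'.1
  rw [card_product] at this
  have := two_mul_card_sortedPairs n
  rw [edgePairs]
  nlinarith

lemma two_mul_card_betweenTriples_le (n : ℕ) : 2 * #(betweenTriples n) ≤ n ^ 3 := by
  have := two_mul_card_filter_le_of_involutive (s := univ)
    (P := fun t : Fin n × Fin n × Fin n => t.2.1 < t.2.2 ∧ t.2.1 ≠ t.1 ∧ t.2.2 ≠ t.1)
    (g := fun t => (t.1, t.2.2, t.2.1)) (fun t => rfl) (fun t _ => mem_univ _)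
    fun t ht ht' => ht.1.not_gt ht'.1
  simpa [betweenTriples, pow_succ, mul_assoc] using this

lemma three_mul_card_requirements_lt (hn : 2 ≤ n) : 3 * #(requirements n) < 2 * n ^ 4 := by
  have := eight_mul_card_edgePairs_le n
  have := two_mul_card_betweenTriples_le n
  rw [requirements, card_disjSum]
  nlinarith

open Classical in
lemma card_filter_not_meets_le {r : Requirement n} (hr : r ∈ requirements n) :
    (#{σ : Perm (Fin n) | ¬ Meets (Fin.val ∘ ⇑σ) r} : ℝ) ≤ 2 / 3 * Fintype.card (Perm (Fin n)) := by
  rcases r with ⟨⟨u, w⟩, x, y⟩ | ⟨v, u, w⟩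
  · simp only [requirements, inl_mem_disjSum, edgePairs, sortedPairs, mem_filter, mem_product,
      mem_univ, true_and] at hr
    exact card_filter_not_le_of_exists_comp_pow (fun f => Separates f u w x y)
      (exists_separates_comp_pow hr.2.1.ne (hr.2.1.trans_le hr.1.2).ne hr.2.2.1 hr.2.2.2)
  · simp only [requirements, inr_mem_disjSum, betweenTriples, mem_filter, mem_univ,
      true_and] at hr
    exact card_filter_not_le_of_exists_comp_pow (fun f => IsBetween f v u w)
      (exists_isBetween_comp_pow hr.2.1 hr.2.2 hr.1.ne)

lemma exists_separates_of_forall_edgePairs {ι : Type*} {f : ι → Fin n → ℕ}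
    (h : ∀ q ∈ edgePairs n, ∃ i, Separates (f i) q.1.1 q.1.2 q.2.1 q.2.2) {u w x y : Fin n}
    (hux : u ≠ x) (huy : u ≠ y) (hwx : w ≠ x) (hwy : w ≠ y) : ∃ i, Separates (f i) u w x y := by
  wlog huw : u ≤ w generalizing u w
  · obtain ⟨i, hi⟩ := this hwx hwy hux huy (le_of_not_ge huw)
    exact ⟨i, hi.swap_left⟩
  wlog hxy : x ≤ y generalizing x y
  · obtain ⟨i, hi⟩ := this huy hux hwy hwx (le_of_not_ge hxy)
    exact ⟨i, hi.swap_right⟩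
  wlog hlt : u < x generalizing u w x y
  · obtain ⟨i, hi⟩ := this hxy hux.symm hwx.symm huy.symm hwy.symm huw
      (lt_of_le_of_ne (not_lt.1 hlt) hux.symm)
    exact ⟨i, hi.symm⟩
  exact h ((u, w), (x, y)) (by simp [edgePairs, sortedPairs, *])

lemma exists_isBetween_of_forall_betweenTriples {ι : Type*} {f : ι → Fin n → ℕ}
    (h : ∀ t ∈ betweenTriples n, ∃ i, IsBetween (f i) t.1 t.2.1 t.2.2) {v u w : Fin n}
    (huv : u ≠ v) (hwv : w ≠ v) (huw : u ≠ w) : ∃ i, IsBetween (f i) v u w := by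
  wlog hlt : u < w generalizing u w
  · obtain ⟨i, hi⟩ := this hwv huv huw.symm (lt_of_le_of_ne (not_lt.1 hlt) huw.symm)
    exact ⟨i, hi.symm⟩
  exact h (v, u, w) (by simp [betweenTriples, *])

end Requirements

lemma one_le_floor_ten_mul_log {n : ℕ} (hn : 2 ≤ n) : 1 ≤ ⌊10 * Real.log n⌋₊ := by
  have : Real.log 2 ≤ Real.log n := Real.log_le_log (by norm_num) (by exact_mod_cast hn)
  exact Nat.le_floor (by push_cast; linarith [Real.log_two_gt_d9])

lemma pow_four_le_three_halves_pow (n : ℕ) :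
    (n : ℝ) ^ 4 ≤ (3 / 2) ^ (⌊10 * Real.log n⌋₊ + 1) := by
  rcases Nat.eq_zero_or_pos n with rfl | hn
  · norm_num
  have hlog : 2 / 5 < Real.log (3 / 2) := by
    rw [Real.log_div (by norm_num) (by norm_num)]
    linarith [Real.log_three_gt_d9, Real.log_two_lt_d9]
  have hfloor := Nat.lt_floor_add_one (10 * Real.log n)
  rw [← Real.log_le_log_iff (by positivity) (by positivity), Real.log_pow, Real.log_pow]
  push_cast
  nlinarith [Real.log_natCast_nonneg n]

lemma natCast_mul_two_thirds_pow_lt_one {K n : ℕ} (hK : 3 * K < 2 * n ^ 4) :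
    (K : ℝ) * (2 / 3) ^ ⌊10 * Real.log n⌋₊ < 1 := by
  have hn := pow_four_le_three_halves_pow n
  have hK' : (3 * K : ℝ) < 2 * n ^ 4 := by exact_mod_cast hK
  set p := ⌊10 * Real.log n⌋₊
  have hcancel : (3 / 2 : ℝ) ^ (p + 1) * (2 / 3) ^ p = 3 / 2 := by
    rw [pow_succ, mul_right_comm, ← mul_pow]; norm_num
  have hp : (0 : ℝ) < (2 / 3) ^ p := by positivity
  nlinarith

/-- Let `n ≥ 2` and let `G` be the complete graph on `n` vertices with a loop at every
vertex. Then there exist `p ≤ 10 log n` linear orderings of the vertex set such that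
(1) every pair of edges with no common endpoint are separated in some ordering, and
(2) for all distinct vertices `u, v, w`, some ordering places `v` strictly between
`u` and `w`. -/
theorem complete_graph_with_loops_orderings (n : ℕ) (hn : 2 ≤ n) :
    ∃ p : ℕ, 1 ≤ p ∧ (p : ℝ) ≤ 10 * Real.log n ∧
      ∃ f : Fin p → Fin n → ℕ, (∀ i, Function.Injective (f i)) ∧
        (∀ u w x y : Fin n, u ≠ x → u ≠ y → w ≠ x → w ≠ y →
          ∃ i, Separates (f i) u w x y) ∧
        (∀ v u w : Fin n, u ≠ v → w ≠ v → u ≠ w →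
          ∃ i, (f i u < f i v ∧ f i v < f i w) ∨ (f i w < f i v ∧ f i v < f i u)) := by
  classical
  obtain ⟨F, hF⟩ := exists_forall_exists_notMem_of_card_mul_pow_lt (requirements n) _
    (fun _ => card_filter_not_meets_le)
    (natCast_mul_two_thirds_pow_lt_one (three_mul_card_requirements_lt hn))
  have hmeets : ∀ r ∈ requirements n, ∃ i, Meets (Fin.val ∘ ⇑(F i)) r :=
    fun r hr => (hF r hr).imp fun i hi => of_not_not fun h => hi (mem_filter.2 ⟨mem_univ _, h⟩)
  refine ⟨_, one_le_floor_ten_mul_log hn, Nat.floor_le (by positivity), fun i => Fin.val ∘ ⇑(F i),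
    fun i => Fin.val_injective.comp (F i).injective, fun u w x y hux huy hwx hwy => ?_,
    fun v u w huv hwv huw => ?_⟩
  · exact exists_separates_of_forall_edgePairs
      (fun q hq => hmeets (.inl q) (inl_mem_disjSum.2 hq)) hux huy hwx hwy
  · exact exists_isBetween_of_forall_betweenTriples
      (fun t ht => hmeets (.inr t) (inr_mem_disjSum.2 ht)) huv hwv huw
end

section
/- Every graph G with maximum degree Δ has strong separation dimension at most the separation dimension of G plus 2Δ + 2. -/
/-- `f` is a separating representation of `G`: a family of linear orderings of `V(G)`
(injective functions to `ℕ`) such that every pair of disjoint edges is separated in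
some ordering. -/
def IsSepRep {V : Type*} (G : SimpleGraph V) {k : ℕ} (f : Fin k → V → ℕ) : Prop :=
  (∀ i, Function.Injective (f i)) ∧
  ∀ ⦃v w x y : V⦄, G.Adj v w → G.Adj x y → v ≠ x → v ≠ y → w ≠ x → w ≠ y →
    ∃ i, Separates (f i) v w x y

/-- `f` is a strongly separating representation of `G`: separating, and in addition for
every edge `vw` and vertex `x ∉ {v,w}` some ordering has `x` before both `v,w` and some
ordering has `x` after both `v,w`. -/
def IsStrongSepRep {V : Type*} (G : SimpleGraph V) {k : ℕ} (f : Fin k → V → ℕ) : Prop :=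
  IsSepRep G f ∧
  ∀ ⦃v w x : V⦄, G.Adj v w → x ≠ v → x ≠ w →
    (∃ i, f i x < f i v ∧ f i x < f i w) ∧ (∃ j, f j v < f j x ∧ f j w < f j x)

/-- The separation dimension of `G`: the minimum size of a (nonempty) separating
representation of `G`. -/
noncomputable def sepDim {V : Type*} (G : SimpleGraph V) : ℕ :=
  sInf {k | 1 ≤ k ∧ ∃ f : Fin k → V → ℕ, IsSepRep G f}

/-- The strong separation dimension of `G`: the minimum size of a (nonempty) strongly
separating representation of `G`. -/
noncomputable def strongSepDim {V : Type*} (G : SimpleGraph V) : ℕ :=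
  sInf {k | 1 ≤ k ∧ ∃ f : Fin k → V → ℕ, IsStrongSepRep G f}

/-!
Colour `G` properly with `Δ + 1` colours (greedily). For each colour `c` take the ordering that
lists the class of `c` first and then all other vertices, both parts in one fixed order, together
with its reverse. Given an edge `vw` and a vertex `x ∉ {v, w}`, the colours of `v` and `w` differ,
so `x` precedes both `v` and `w` in the ordering of its own colour, unless `x` shares the colour
of (say) `v` and comes after `v`; then `x` follows both in the ordering of the colour of `w`.
The reverses supply the opposite side. Appending these `2Δ + 2` orderings to an optimal
separating representation yields a strongly separating one.
-/

open Function

section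

variable {V : Type*}

def LiesOutside (f : V → ℕ) (x v w : V) : Prop :=
  (f x < f v ∧ f x < f w) ∨ (f v < f x ∧ f w < f x)

lemma LiesOutside.symm {f : V → ℕ} {x v w : V} (h : LiesOutside f x v w) :
    LiesOutside f x w v :=
  h.imp And.symm And.symm

section FrontOrder

variable [Fintype V] (p : V → Prop) [DecidablePred p]

noncomputable def frontOrder (v : V) : ℕ :=
  (if p v then 0 else Fintype.card V) + Fintype.equivFin V v

variable {p}

lemma frontOrder_lt_two_mul_card (v : V) : frontOrder p v < 2 * Fintype.card V := by
  have := (Fintype.equivFin V v).isLt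
  unfold frontOrder
  split_ifs <;> omega

lemma frontOrder_lt_of_pos_of_neg {v x : V} (hv : p v) (hx : ¬ p x) :
    frontOrder p v < frontOrder p x := by
  have := (Fintype.equivFin V v).isLt
  simp only [frontOrder, if_pos hv, if_neg hx]
  omega

lemma frontOrder_lt_frontOrder_iff {v x : V} (h : p v ↔ p x) :
    frontOrder p v < frontOrder p x ↔ Fintype.equivFin V v < Fintype.equivFin V x := by
  simp only [frontOrder, h, Fin.lt_def]
  omega

variable (p)

lemma frontOrder_injective : Injective (frontOrder p) := by
  intro v x h
  by_cases hvx : p v ↔ p x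
  · simp only [frontOrder, hvx, Nat.add_left_cancel_iff] at h
    exact (Fintype.equivFin V).injective (Fin.ext h)
  · by_cases hv : p v
    · exact absurd h (frontOrder_lt_of_pos_of_neg hv (by tauto)).ne
    · exact absurd h (frontOrder_lt_of_pos_of_neg (p := p) (by tauto) hv).ne'

noncomputable def backOrder (v : V) : ℕ :=
  2 * Fintype.card V - frontOrder p v

variable {p}

lemma backOrder_lt_backOrder_iff {v x : V} :
    backOrder p v < backOrder p x ↔ frontOrder p x < frontOrder p v := by
  have := frontOrder_lt_two_mul_card (p := p) v
  have := frontOrder_lt_two_mul_card (p := p) x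
  unfold backOrder
  omega

variable (p)

lemma backOrder_injective : Injective (backOrder p) := by
  intro v x h
  have := frontOrder_lt_two_mul_card (p := p) v
  have := frontOrder_lt_two_mul_card (p := p) x
  exact frontOrder_injective p (by unfold backOrder at h; omega)

end FrontOrder

namespace SimpleGraph

variable [Fintype V] (G : SimpleGraph V)

lemma exists_isSepRep : ∃ k, 1 ≤ k ∧ ∃ f : Fin k → V → ℕ, IsSepRep G f := by
  classical
  let e := (Fintype.equivFin (Finset V)).symm
  refine ⟨_, Fintype.card_pos, fun i => frontOrder (· ∈ e i),
    fun i => frontOrder_injective _, ?_⟩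
  intro v w x y _ _ hvx hvy hwx hwy
  refine ⟨e.symm {v, w}, Or.inl ?_⟩
  simp only [e, Equiv.apply_symm_apply]
  refine ⟨?_, ?_, ?_, ?_⟩ <;> apply frontOrder_lt_of_pos_of_neg <;> simp [*, Ne.symm]

variable {G}

lemma exists_frontOrder_liesOutside_of_color_ne {α : Type*} [DecidableEq α] (C : G.Coloring α)
    {v w x : V} (hvw : C v ≠ C w) (hxw : C x ≠ C w) (hxv : x ≠ v) :
    ∃ c, LiesOutside (frontOrder (C · = c)) x v w := by
  by_cases hcxv : C x = C v
  · rcases lt_or_gt_of_ne ((Fintype.equivFin V).injective.ne hxv) with hlt | hgt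
    · refine ⟨C x, Or.inl ⟨?_, frontOrder_lt_of_pos_of_neg rfl hxw.symm⟩⟩
      exact (frontOrder_lt_frontOrder_iff (by simp [hcxv])).2 hlt
    · refine ⟨C w, Or.inr ⟨?_, frontOrder_lt_of_pos_of_neg rfl hxw⟩⟩
      exact (frontOrder_lt_frontOrder_iff (by simp [hvw, hxw])).2 hgt
  · exact ⟨C x, Or.inl ⟨frontOrder_lt_of_pos_of_neg rfl (Ne.symm hcxv),
      frontOrder_lt_of_pos_of_neg rfl hxw.symm⟩⟩

lemma exists_frontOrder_liesOutside {α : Type*} [DecidableEq α] (C : G.Coloring α)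
    {v w x : V} (hvw : G.Adj v w) (hxv : x ≠ v) (hxw : x ≠ w) :
    ∃ c, LiesOutside (frontOrder (C · = c)) x v w := by
  by_cases hcxw : C x = C w
  · obtain ⟨c, hc⟩ := exists_frontOrder_liesOutside_of_color_ne C (C.valid hvw.symm)
      (by rw [hcxw]; exact C.valid hvw.symm) hxw
    exact ⟨c, hc.symm⟩
  · exact exists_frontOrder_liesOutside_of_color_ne C (C.valid hvw) hcxw hxv

noncomputable def Coloring.orders {m : ℕ} (C : G.Coloring (Fin m)) : Fin (m + m) → V → ℕ :=
  Fin.append (fun c => frontOrder (C · = c)) (fun c => backOrder (C · = c))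

lemma Coloring.orders_injective {m : ℕ} (C : G.Coloring (Fin m)) (i : Fin (m + m)) :
    Injective (C.orders i) := by
  refine Fin.addCases (fun c => ?_) (fun c => ?_) i
  · rw [Coloring.orders, Fin.append_left]
    exact frontOrder_injective _
  · rw [Coloring.orders, Fin.append_right]
    exact backOrder_injective _

lemma Coloring.exists_orders_lt_and_exists_orders_gt {m : ℕ} (C : G.Coloring (Fin m))
    {v w x : V} (hvw : G.Adj v w) (hxv : x ≠ v) (hxw : x ≠ w) :
    (∃ i, C.orders i x < C.orders i v ∧ C.orders i x < C.orders i w) ∧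
      (∃ j, C.orders j v < C.orders j x ∧ C.orders j w < C.orders j x) := by
  obtain ⟨c, ⟨hv, hw⟩ | ⟨hv, hw⟩⟩ := exists_frontOrder_liesOutside C hvw hxv hxw
  · refine ⟨⟨Fin.castAdd m c, ?_⟩, ⟨Fin.natAdd m c, ?_⟩⟩
    · simp only [Coloring.orders, Fin.append_left]
      exact ⟨hv, hw⟩
    · simp only [Coloring.orders, Fin.append_right, backOrder_lt_backOrder_iff]
      exact ⟨hv, hw⟩
  · refine ⟨⟨Fin.natAdd m c, ?_⟩, ⟨Fin.castAdd m c, ?_⟩⟩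
    · simp only [Coloring.orders, Fin.append_right, backOrder_lt_backOrder_iff]
      exact ⟨hv, hw⟩
    · simp only [Coloring.orders, Fin.append_left]
      exact ⟨hv, hw⟩

variable [DecidableRel G.Adj]

lemma exists_coloring_on_of_degree_le {Δ : ℕ} (hdeg : ∀ v, G.degree v ≤ Δ) (s : Finset V) :
    ∃ C : V → Fin (Δ + 1), ∀ v ∈ s, ∀ w ∈ s, G.Adj v w → C v ≠ C w := by
  classical
  induction s using Finset.induction_on with
  | empty => exact ⟨fun _ => 0, by simp⟩
  | @insert a s ha ih =>
    obtain ⟨C, hC⟩ := ih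
    have hcard :
        ((s.filter (G.Adj a)).image C).card < (Finset.univ : Finset (Fin (Δ + 1))).card :=
      calc ((s.filter (G.Adj a)).image C).card ≤ (s.filter (G.Adj a)).card := Finset.card_image_le
        _ ≤ G.degree a := by
          rw [← card_neighborFinset_eq_degree]
          exact Finset.card_le_card fun w hw => by simpa using (Finset.mem_filter.1 hw).2
        _ < _ := by simpa using Nat.lt_succ_of_le (hdeg a)
    obtain ⟨c, -, hc⟩ := Finset.exists_mem_notMem_of_card_lt_card hcard
    have hfresh : ∀ w ∈ s, G.Adj a w → c ≠ C w := fun w hw hadj h =>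
      hc (Finset.mem_image.2 ⟨w, Finset.mem_filter.2 ⟨hw, hadj⟩, h.symm⟩)
    have hupd : ∀ w ∈ s, update C a c w = C w := fun w hw =>
      update_of_ne (by rintro rfl; exact ha hw) _ _
    refine ⟨update C a c, ?_⟩
    intro v hv w hw hvw
    rcases Finset.mem_insert.1 hv with rfl | hvs
    · rcases Finset.mem_insert.1 hw with rfl | hws
      · exact (hvw.ne rfl).elim
      · rw [update_self, hupd w hws]; exact hfresh w hws hvw
    · rcases Finset.mem_insert.1 hw with rfl | hws
      · rw [update_self, hupd v hvs]; exact (hfresh v hvs hvw.symm).symm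
      · rw [hupd v hvs, hupd w hws]; exact hC v hvs w hws hvw

lemma colorable_succ_of_degree_le {Δ : ℕ} (hdeg : ∀ v, G.degree v ≤ Δ) :
    G.Colorable (Δ + 1) := by
  obtain ⟨C, hC⟩ := exists_coloring_on_of_degree_le hdeg Finset.univ
  exact ⟨Coloring.mk C fun hvw => hC _ (Finset.mem_univ _) _ (Finset.mem_univ _) hvw⟩

end SimpleGraph

lemma IsSepRep.isStrongSepRep_append {G : SimpleGraph V} {k m : ℕ} {f : Fin k → V → ℕ}
    {g : Fin m → V → ℕ} (hf : IsSepRep G f) (hg_inj : ∀ i, Injective (g i))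
    (hg : ∀ ⦃v w x : V⦄, G.Adj v w → x ≠ v → x ≠ w →
      (∃ i, g i x < g i v ∧ g i x < g i w) ∧ (∃ j, g j v < g j x ∧ g j w < g j x)) :
    IsStrongSepRep G (Fin.append f g) := by
  refine ⟨⟨fun i => ?_, fun v w x y hvw hxy hvx hvy hwx hwy => ?_⟩,
    fun v w x hvw hxv hxw => ?_⟩
  · refine Fin.addCases (fun i => ?_) (fun i => ?_) i
    · simpa using hf.1 i
    · simpa using hg_inj i
  · obtain ⟨i, hi⟩ := hf.2 hvw hxy hvx hvy hwx hwy
    exact ⟨Fin.castAdd m i, by simpa using hi⟩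
  · obtain ⟨⟨i, hi⟩, ⟨j, hj⟩⟩ := hg hvw hxv hxw
    exact ⟨⟨Fin.natAdd k i, by simpa using hi⟩, ⟨Fin.natAdd k j, by simpa using hj⟩⟩

end

/-- Every graph with maximum degree `Δ` has strong separation dimension at most its
separation dimension plus `2Δ + 2`. -/
theorem strongSepDim_le_sepDim_add {V : Type*} [Fintype V] (G : SimpleGraph V)
    [DecidableRel G.Adj] (Δ : ℕ) (hdeg : ∀ v, G.degree v ≤ Δ) :
    strongSepDim G ≤ sepDim G + 2 * Δ + 2 := by
  obtain ⟨-, f, hf⟩ := Nat.sInf_mem G.exists_isSepRep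
  obtain ⟨C⟩ := G.colorable_succ_of_degree_le hdeg
  have hstrong := hf.isStrongSepRep_append C.orders_injective
    fun _ _ _ => C.exists_orders_lt_and_exists_orders_gt
  calc strongSepDim G ≤ sepDim G + ((Δ + 1) + (Δ + 1)) :=
        Nat.sInf_le ⟨by omega, _, hstrong⟩
    _ = sepDim G + 2 * Δ + 2 := by ring
end

section
/- Let G be a graph with connected components G_1,…,G_k, where G_a has strong separation dimension p_a. Then G has strong separation dimension at most max{p_1,…,p_k,2}; moreover there is a strongly separating representation of that size in which each ordering places the components in consecutive blocks, ordered either as V(G_1),…,V(G_k) or as V(G_k),…,V(G_1). -/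
open SimpleGraph Function

lemma mul_add_lt_mul_add_of_lt {N a b r s : ℕ} (hab : a < b) (hr : r < N) :
    N * a + r < N * b + s :=
  calc N * a + r < N * (a + 1) := by rw [mul_add_one]; omega
    _ ≤ N * b + s := le_add_right (Nat.mul_le_mul_left N hab)

section Representations

variable {V : Type*} {G : SimpleGraph V} {k m : ℕ}

theorem separates_comp_strictMono {φ : ℕ → ℕ} (hφ : StrictMono φ) (f : V → ℕ) (v w x y : V) :
    Separates (φ ∘ f) v w x y ↔ Separates f v w x y := by
  simp only [Separates, comp_apply, hφ.lt_iff_lt]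

theorem IsStrongSepRep.comp_strictMono {f : Fin k → V → ℕ} (hf : IsStrongSepRep G f)
    (φ : Fin k → ℕ → ℕ) (hφ : ∀ i, StrictMono (φ i)) :
    IsStrongSepRep G fun i => φ i ∘ f i := by
  obtain ⟨⟨hinj, hsep⟩, hstrong⟩ := hf
  refine ⟨⟨fun i => (hφ i).injective.comp (hinj i), ?_⟩, ?_⟩
  · intro v w x y hvw hxy hvx hvy hwx hwy
    obtain ⟨i, hi⟩ := hsep hvw hxy hvx hvy hwx hwy
    exact ⟨i, (separates_comp_strictMono (hφ i) _ _ _ _ _).2 hi⟩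
  · intro v w x hvw hxv hxw
    obtain ⟨⟨i, hi⟩, ⟨j, hj⟩⟩ := hstrong hvw hxv hxw
    exact ⟨⟨i, by simpa only [comp_apply, (hφ i).lt_iff_lt]⟩,
      ⟨j, by simpa only [comp_apply, (hφ j).lt_iff_lt]⟩⟩

theorem IsStrongSepRep.comp_surjective {f : Fin k → V → ℕ} (hf : IsStrongSepRep G f)
    (σ : Fin m → Fin k) (hσ : Surjective σ) : IsStrongSepRep G (f ∘ σ) := by
  obtain ⟨⟨hinj, hsep⟩, hstrong⟩ := hf
  refine ⟨⟨fun i => hinj (σ i), ?_⟩, ?_⟩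
  · intro v w x y hvw hxy hvx hvy hwx hwy
    obtain ⟨i, hi⟩ := hsep hvw hxy hvx hvy hwx hwy
    obtain ⟨i', rfl⟩ := hσ i
    exact ⟨i', hi⟩
  · intro v w x hvw hxv hxw
    obtain ⟨⟨i, hi⟩, ⟨j, hj⟩⟩ := hstrong hvw hxv hxw
    obtain ⟨i', rfl⟩ := hσ i
    obtain ⟨j', rfl⟩ := hσ j
    exact ⟨⟨i', hi⟩, ⟨j', hj⟩⟩

end Representations

section Existence

variable {W : Type*} [Fintype W] [DecidableEq W]

noncomputable def complFirstOrder (S : Finset W) (u : W) : ℕ :=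
  Fintype.card W * (if u ∈ S then 1 else 0) + Fintype.equivFin W u

theorem complFirstOrder_lt {S : Finset W} {u u' : W} (hu : u ∉ S) (hu' : u' ∈ S) :
    complFirstOrder S u < complFirstOrder S u' := by
  unfold complFirstOrder
  rw [if_neg hu, if_pos hu']
  exact mul_add_lt_mul_add_of_lt zero_lt_one (Fin.is_lt _)

theorem complFirstOrder_injective (S : Finset W) : Injective (complFirstOrder S) := by
  intro u u' h
  by_cases hu : u ∈ S <;> by_cases hu' : u' ∈ S
  · refine (Fintype.equivFin W).injective (Fin.ext ?_)
    simpa [complFirstOrder, hu, hu'] using h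
  · exact absurd h (complFirstOrder_lt hu' hu).ne'
  · exact absurd h (complFirstOrder_lt hu hu').ne
  · refine (Fintype.equivFin W).injective (Fin.ext ?_)
    simpa [complFirstOrder, hu, hu'] using h

end Existence

theorem exists_isStrongSepRep {W : Type*} [Finite W] (H : SimpleGraph W) :
    ∃ k, 1 ≤ k ∧ ∃ f : Fin k → W → ℕ, IsStrongSepRep H f := by
  classical
  cases nonempty_fintype W
  let e := (Fintype.equivFin (Finset W)).symm
  refine ⟨_, Fintype.card_pos, fun i => complFirstOrder (e i),
    ⟨fun i => complFirstOrder_injective _, ?_⟩, ?_⟩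
  · intro v w x y _ _ hvx hvy hwx hwy
    have hv : v ∉ ({x, y} : Finset W) := by simp [hvx, hvy]
    have hw : w ∉ ({x, y} : Finset W) := by simp [hwx, hwy]
    refine ⟨e.symm {x, y}, Or.inl ?_⟩
    simp only [e.apply_symm_apply]
    exact ⟨complFirstOrder_lt hv (by simp), complFirstOrder_lt hv (by simp),
      complFirstOrder_lt hw (by simp), complFirstOrder_lt hw (by simp)⟩
  · intro v w x _ hxv hxw
    refine ⟨⟨e.symm {x}ᶜ, ?_⟩, ⟨e.symm {x}, ?_⟩⟩ <;> simp only [e.apply_symm_apply]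
    · exact ⟨complFirstOrder_lt (by simp) (by simp [hxv.symm]),
        complFirstOrder_lt (by simp) (by simp [hxw.symm])⟩
    · exact ⟨complFirstOrder_lt (by simp [hxv.symm]) (by simp),
        complFirstOrder_lt (by simp [hxw.symm]) (by simp)⟩

theorem strongSepDim_spec {W : Type*} [Finite W] (H : SimpleGraph W) :
    1 ≤ strongSepDim H ∧ ∃ f : Fin (strongSepDim H) → W → ℕ, IsStrongSepRep H f :=
  Nat.sInf_mem (exists_isStrongSepRep H)

theorem exists_isStrongSepRep_of_strongSepDim_le {W : Type*} [Finite W] {H : SimpleGraph W}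
    {m : ℕ} (hm : strongSepDim H ≤ m) : ∃ f : Fin m → W → ℕ, IsStrongSepRep H f := by
  obtain ⟨hp, g, hg⟩ := strongSepDim_spec H
  have hσ : Surjective fun i : Fin m => (⟨i % strongSepDim H, Nat.mod_lt _ hp⟩ : Fin _) :=
    fun j => ⟨⟨j, j.2.trans_le hm⟩, Fin.ext (Nat.mod_eq_of_lt j.2)⟩
  exact ⟨_, hg.comp_surjective _ hσ⟩

theorem strongSepDim_le {V : Type*} {G : SimpleGraph V} {k : ℕ} {f : Fin k → V → ℕ}
    (hk : 1 ≤ k) (hf : IsStrongSepRep G f) : strongSepDim G ≤ k :=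
  Nat.sInf_le ⟨hk, f, hf⟩

section Components

variable {V : Type*} {G : SimpleGraph V} (idx : G.ConnectedComponent → ℕ)

def ComponentsAscending (f : V → ℕ) : Prop :=
  ∀ v w : V, idx (G.connectedComponentMk v) < idx (G.connectedComponentMk w) → f v < f w

def ComponentsDescending (f : V → ℕ) : Prop :=
  ∀ v w : V, idx (G.connectedComponentMk v) < idx (G.connectedComponentMk w) → f w < f v

variable {idx}

theorem ComponentsAscending.separates (hidx : Injective idx) {f : V → ℕ}
    (hf : ComponentsAscending idx f) {v w x y : V} (hvw : G.Adj v w) (hxy : G.Adj x y)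
    (hvx : G.connectedComponentMk v ≠ G.connectedComponentMk x) : Separates f v w x y := by
  have hw := ConnectedComponent.connectedComponentMk_eq_of_adj hvw
  have hy := ConnectedComponent.connectedComponentMk_eq_of_adj hxy
  rcases lt_or_gt_of_ne (hidx.ne hvx) with h | h
  · exact Or.inl ⟨hf _ _ h, hf _ _ (hy ▸ h), hf _ _ (hw ▸ h), hf _ _ (hw ▸ hy ▸ h)⟩
  · exact Or.inr ⟨hf _ _ h, hf _ _ (hw ▸ h), hf _ _ (hy ▸ h), hf _ _ (hw ▸ hy ▸ h)⟩

theorem isStrongSepRep_of_components (hidx : Injective idx) {m : ℕ} {f : Fin m → V → ℕ}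
    (hcomp : ∀ c : G.ConnectedComponent, IsStrongSepRep (G.induce c.supp) fun i => f i ∘ (↑))
    (hblocks : ∀ i, ComponentsAscending idx (f i) ∨ ComponentsDescending idx (f i))
    {i₀ i₁ : Fin m} (h₀ : ComponentsAscending idx (f i₀))
    (h₁ : ComponentsDescending idx (f i₁)) : IsStrongSepRep G f := by
  refine ⟨⟨fun i v w h => ?_, ?_⟩, ?_⟩
  · by_cases hc : G.connectedComponentMk v = G.connectedComponentMk w
    · exact congrArg Subtype.val <| (hcomp _).1.1 i (a₁ := ⟨v, hc⟩) (a₂ := ⟨w, rfl⟩) h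
    · rcases lt_or_gt_of_ne (hidx.ne hc) with hlt | hlt <;> rcases hblocks i with hi | hi
      all_goals have := hi _ _ hlt; omega
  · intro v w x y hvw hxy hvx hvy hwx hwy
    by_cases hc : G.connectedComponentMk v = G.connectedComponentMk x
    · have hw := ConnectedComponent.connectedComponentMk_eq_of_adj hvw
      have hy := ConnectedComponent.connectedComponentMk_eq_of_adj hxy
      exact (hcomp _).1.2 (v := ⟨v, hc⟩) (w := ⟨w, hw.symm.trans hc⟩) (x := ⟨x, rfl⟩)
        (y := ⟨y, hy.symm⟩) hvw hxy (mt (congrArg Subtype.val) hvx) (mt (congrArg Subtype.val) hvy)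
        (mt (congrArg Subtype.val) hwx) (mt (congrArg Subtype.val) hwy)
    · exact ⟨i₀, h₀.separates hidx hvw hxy hc⟩
  · intro v w x hvw hxv hxw
    have hw := ConnectedComponent.connectedComponentMk_eq_of_adj hvw
    by_cases hc : G.connectedComponentMk x = G.connectedComponentMk v
    · exact (hcomp _).2 (v := ⟨v, rfl⟩) (w := ⟨w, hw.symm⟩) (x := ⟨x, hc⟩)
        hvw (mt (congrArg Subtype.val) hxv) (mt (congrArg Subtype.val) hxw)
    · rcases lt_or_gt_of_ne (hidx.ne hc) with h | h
      · exact ⟨⟨i₀, h₀ _ _ h, h₀ _ _ (hw ▸ h)⟩, ⟨i₁, h₁ _ _ h, h₁ _ _ (hw ▸ h)⟩⟩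
      · exact ⟨⟨i₁, h₁ _ _ h, h₁ _ _ (hw ▸ h)⟩, ⟨i₀, h₀ _ _ h, h₀ _ _ (hw ▸ h)⟩⟩

end Components

theorem exists_isStrongSepRep_componentsAscending_or_descending {V : Type*} [Finite V]
    {G : SimpleGraph V} {idx : G.ConnectedComponent → ℕ} (hidx : Injective idx) {m : ℕ}
    (hm : 2 ≤ m) (hdim : ∀ c : G.ConnectedComponent, strongSepDim (G.induce c.supp) ≤ m) :
    ∃ f : Fin m → V → ℕ, IsStrongSepRep G f ∧
      ∀ i, ComponentsAscending idx (f i) ∨ ComponentsDescending idx (f i) := by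
  choose g hg using fun c => exists_isStrongSepRep_of_strongSepDim_le (hdim c)
  let r (i : Fin m) (v : V) : ℕ := g _ i ⟨v, rfl⟩
  obtain ⟨N, hN⟩ := Finite.exists_le (uncurry r)
  obtain ⟨M, hM⟩ := Finite.exists_le fun v => idx (G.connectedComponentMk v)
  let key (i : Fin m) (c : G.ConnectedComponent) : ℕ :=
    if (i : ℕ) = 1 then M - idx c else idx c
  let f (i : Fin m) (v : V) : ℕ := (N + 1) * key i (G.connectedComponentMk v) + r i v
  have hasc (i : Fin m) (hi : (i : ℕ) ≠ 1) : ComponentsAscending idx (f i) := fun v w h => by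
    refine mul_add_lt_mul_add_of_lt ?_ (Nat.lt_succ_of_le (hN (i, v)))
    simpa only [key, if_neg hi] using h
  have hdesc (i : Fin m) (hi : (i : ℕ) = 1) : ComponentsDescending idx (f i) := fun v w h => by
    refine mul_add_lt_mul_add_of_lt ?_ (Nat.lt_succ_of_le (hN (i, w)))
    have := hM w
    simp only [key, if_pos hi]
    omega
  have hblocks i : ComponentsAscending idx (f i) ∨ ComponentsDescending idx (f i) :=
    (em' ((i : ℕ) = 1)).imp (hasc i) (hdesc i)
  have hcomp (c : G.ConnectedComponent) : IsStrongSepRep (G.induce c.supp) fun i => f i ∘ (↑) := by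
    have hres : (fun i => f i ∘ (↑)) = fun i => ((N + 1) * key i c + ·) ∘ g c i := by
      funext i ⟨v, hv⟩
      subst hv
      rfl
    rw [hres]
    exact (hg c).comp_strictMono _ fun i => strictMono_id.const_add _
  exact ⟨f, isStrongSepRep_of_components hidx hcomp hblocks (i₀ := ⟨0, by omega⟩)
    (hasc _ zero_ne_one) (hdesc ⟨1, hm⟩ rfl), hblocks⟩

/-- Let `G` be a graph whose connected components are enumerated (injectively) by
`idx : G.ConnectedComponent → ℕ`. Then the strong separation dimension of `G` is at most
the maximum of `2` and the strong separation dimensions of its components; moreover there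
is a strongly separating representation of that size in which every ordering places the
components in consecutive blocks, ordered according to `idx` or its reverse. -/
theorem strongSepDim_components {V : Type*} [Fintype V] (G : SimpleGraph V)
    (idx : G.ConnectedComponent → ℕ) (hidx : Function.Injective idx) :
    strongSepDim G ≤ max 2 (⨆ c : G.ConnectedComponent, strongSepDim (G.induce c.supp)) ∧
    ∃ (m : ℕ) (f : Fin m → V → ℕ), 1 ≤ m ∧
      m ≤ max 2 (⨆ c : G.ConnectedComponent, strongSepDim (G.induce c.supp)) ∧
      IsStrongSepRep G f ∧
      ∀ i : Fin m,
        (∀ v w : V, idx (G.connectedComponentMk v) < idx (G.connectedComponentMk w) →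
          f i v < f i w) ∨
        (∀ v w : V, idx (G.connectedComponentMk v) < idx (G.connectedComponentMk w) →
          f i w < f i v) := by
  set m := max 2 (⨆ c : G.ConnectedComponent, strongSepDim (G.induce c.supp))
  have hm : 2 ≤ m := le_max_left _ _
  have hdim (c : G.ConnectedComponent) : strongSepDim (G.induce c.supp) ≤ m :=
    (le_ciSup (f := fun c : G.ConnectedComponent => strongSepDim (G.induce c.supp))
      (Finite.bddAbove_range _) c).trans (le_max_right _ _)
  obtain ⟨f, hf, hblocks⟩ := exists_isStrongSepRep_componentsAscending_or_descending hidx hm hdim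
  exact ⟨strongSepDim_le (by omega) hf, m, f, by omega, le_rfl, hf, hblocks⟩
end

section
/- Fix integers s,t,k ≥ 2 with k even. Let G be a graph with a vertex partition V_1,…,V_k such that each induced subgraph G[V_i] has strong separation dimension at most s, and each bipartite subgraph G[V_i,V_j] (i ≠ j) has strong separation dimension at most t. Then G has strong separation dimension at most 2s + (k−1)t + 20·log k. -/
/-- For disjoint vertex sets `A, B` of `G`, the bipartite subgraph `G[A,B]`:
its vertex set is `A ∪ B` and its edges are the edges of `G` with one endpoint in `A`
and one endpoint in `B`. -/
def crossGraph {V : Type*} (G : SimpleGraph V) (A B : Set V) : SimpleGraph ↥(A ∪ B) where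
  Adj u v := G.Adj u v ∧ ((↑u ∈ A ∧ ↑v ∈ B) ∨ (↑u ∈ B ∧ ↑v ∈ A))
  symm := ⟨by rintro u v ⟨h1, h2⟩; exact ⟨h1.symm, by tauto⟩⟩
  loopless := ⟨by rintro u ⟨h1, _⟩; exact G.loopless.irrefl u h1⟩

section Helpers

variable {V : Type*}

lemma sep_swap_pairs {f : V → ℕ} {v w x y : V} (h : Separates f v w x y) :
    Separates f x y v w := by unfold Separates at *; tauto

lemma sep_swap_right {f : V → ℕ} {v w x y : V} (h : Separates f v w x y) :
    Separates f v w y x := by unfold Separates at *; tauto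

lemma sep_swap_left {f : V → ℕ} {v w x y : V} (h : Separates f v w x y) :
    Separates f w v x y := by unfold Separates at *; tauto

variable [Fintype V]

/-- Combine a class function and an inner function lexicographically. -/
def mix (c d : V → ℕ) : V → ℕ :=
  fun v => c v * (Finset.univ.sup d + 1) + d v

lemma d_lt_mixB (c d : V → ℕ) (v : V) : d v < Finset.univ.sup d + 1 :=
  Nat.lt_succ_of_le (Finset.le_sup (Finset.mem_univ v))

lemma mix_lt_of_lt {c d : V → ℕ} {v w : V} (h : c v < c w) : mix c d v < mix c d w := by
  have h1 := d_lt_mixB c d v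
  have h2 : (c v + 1) * (Finset.univ.sup d + 1) ≤ c w * (Finset.univ.sup d + 1) :=
    Nat.mul_le_mul_right _ h
  have h3 : (c v + 1) * (Finset.univ.sup d + 1)
      = c v * (Finset.univ.sup d + 1) + (Finset.univ.sup d + 1) := by ring
  unfold mix; omega

lemma mix_lt_iff_of_eq {c d : V → ℕ} {v w : V} (h : c v = c w) :
    (mix c d v < mix c d w ↔ d v < d w) := by
  unfold mix; rw [h]; omega

lemma mix_inj {c d : V → ℕ} (h : ∀ v w, c v = c w → d v = d w → v = w) :
    Function.Injective (mix c d) := by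
  intro v w hvw
  rcases lt_trichotomy (c v) (c w) with hc | hc | hc
  · exact absurd hvw (Nat.ne_of_lt (mix_lt_of_lt hc))
  · refine h v w hc ?_
    unfold mix at hvw; rw [hc] at hvw; omega
  · exact absurd hvw.symm (Nat.ne_of_lt (mix_lt_of_lt hc))

/-- Transport a strongly separating family over an arbitrary finite index type. -/
lemma isStrongSepRep_of_index {G : SimpleGraph V} {I : Type*} [Fintype I] (F : I → V → ℕ)
    (h1 : ∀ i, Function.Injective (F i))
    (h2 : ∀ ⦃v w x y : V⦄, G.Adj v w → G.Adj x y → v ≠ x → v ≠ y → w ≠ x → w ≠ y →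
      ∃ i, Separates (F i) v w x y)
    (h3 : ∀ ⦃v w x : V⦄, G.Adj v w → x ≠ v → x ≠ w →
      (∃ i, F i x < F i v ∧ F i x < F i w) ∧ (∃ i, F i v < F i x ∧ F i w < F i x)) :
    ∃ F' : Fin (Fintype.card I) → V → ℕ, IsStrongSepRep G F' := by
  refine ⟨fun j => F ((Fintype.equivFin I).symm j), ⟨fun j => h1 _, ?_⟩, ?_⟩
  · intro v w x y h h' d1 d2 d3 d4
    obtain ⟨i, hi⟩ := h2 h h' d1 d2 d3 d4
    exact ⟨Fintype.equivFin I i, by simpa using hi⟩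
  · intro v w x h d1 d2
    obtain ⟨⟨i, hi⟩, ⟨j, hj⟩⟩ := h3 h d1 d2
    exact ⟨⟨Fintype.equivFin I i, by simpa using hi⟩, ⟨Fintype.equivFin I j, by simpa using hj⟩⟩

/-- Every finite graph has some strongly separating representation. -/
lemma exists_strongSepRep (H : SimpleGraph V) :
    ∃ n, 1 ≤ n ∧ ∃ F : Fin n → V → ℕ, IsStrongSepRep H F := by
  classical
  set N := Fintype.card V with hN
  set e : V → ℕ := fun w => ((Fintype.equivFin V) w : ℕ) with he'
  have he : Function.Injective e := by
    intro a b h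
    exact (Fintype.equivFin V).injective (Fin.val_injective h)
  have heN : ∀ w, e w < N := fun w => ((Fintype.equivFin V) w).isLt
  let F0 : Unit ⊕ (V × V) ⊕ V ⊕ V → V → ℕ := fun o =>
    match o with
    | Sum.inl _ => e
    | Sum.inr (Sum.inl (a, b)) => fun v => (if v = a ∨ v = b then 0 else N) + e v
    | Sum.inr (Sum.inr (Sum.inl a)) => fun v => if v = a then 0 else e v + 1
    | Sum.inr (Sum.inr (Sum.inr a)) => fun v => if v = a then N else e v
  have h1 : ∀ o, Function.Injective (F0 o) := by
    rintro (_ | ⟨⟨a, b⟩⟩ | a | a)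
    · exact he
    · intro u v huv
      simp only [F0] at huv
      by_cases hu : u = a ∨ u = b <;> by_cases hv : v = a ∨ v = b <;>
        simp only [hu, hv, if_true, if_false] at huv
      · exact he (by omega)
      · exact absurd huv (by have := heN u; omega)
      · exact absurd huv (by have := heN v; omega)
      · exact he (by omega)
    · intro u v huv
      simp only [F0] at huv
      by_cases hu : u = a <;> by_cases hv : v = a <;>
        simp only [hu, hv, if_true, if_false] at huv
      · exact hu.trans hv.symm
      · exact absurd huv (by omega)
      · exact absurd huv (by omega)
      · exact he (by omega)
    · intro u v huv
      simp only [F0] at huv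
      by_cases hu : u = a <;> by_cases hv : v = a <;>
        simp only [hu, hv, if_true, if_false] at huv
      · exact hu.trans hv.symm
      · exact absurd huv (by have := heN v; omega)
      · exact absurd huv.symm (by have := heN u; omega)
      · exact he huv
  have h2 : ∀ ⦃v w x y : V⦄, H.Adj v w → H.Adj x y → v ≠ x → v ≠ y → w ≠ x → w ≠ y →
      ∃ o, Separates (F0 o) v w x y := by
    intro v w x y _ _ d1 d2 d3 d4
    refine ⟨Sum.inr (Sum.inl (v, w)), Or.inl ?_⟩
    have hx : ¬(x = v ∨ x = w) := by tauto
    have hy : ¬(y = v ∨ y = w) := by tauto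
    simp only [F0, Separates, hx, hy, if_false, or_true, true_or, if_true]
    have := heN v; have := heN w
    refine ⟨by omega, by omega, by omega, by omega⟩
  have h3 : ∀ ⦃v w x : V⦄, H.Adj v w → x ≠ v → x ≠ w →
      (∃ o, F0 o x < F0 o v ∧ F0 o x < F0 o w) ∧
      (∃ o, F0 o v < F0 o x ∧ F0 o w < F0 o x) := by
    intro v w x _ d1 d2
    constructor
    · refine ⟨Sum.inr (Sum.inr (Sum.inl x)), ?_⟩
      simp only [F0]
      rw [if_pos trivial, if_neg (show ¬v = x from fun h => d1 h.symm),
        if_neg (show ¬w = x from fun h => d2 h.symm)]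
      omega
    · refine ⟨Sum.inr (Sum.inr (Sum.inr x)), ?_⟩
      simp only [F0]
      rw [if_pos trivial, if_neg (show ¬v = x from fun h => d1 h.symm),
        if_neg (show ¬w = x from fun h => d2 h.symm)]
      have hv := heN v; have hw := heN w
      omega
  obtain ⟨F', hF'⟩ := isStrongSepRep_of_index (G := H) F0 h1 h2 h3
  refine ⟨_, ?_, F', hF'⟩
  exact Fintype.card_pos_iff.mpr ⟨Sum.inl ()⟩

/-- Extract a representation of any size at least the strong separation dimension. -/
lemma exists_rep_of_le (H : SimpleGraph V) {n : ℕ} (hn : 1 ≤ n) (h : strongSepDim H ≤ n) :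
    ∃ F : Fin n → V → ℕ, IsStrongSepRep H F := by
  have hne : {m | 1 ≤ m ∧ ∃ f : Fin m → V → ℕ, IsStrongSepRep H f}.Nonempty := by
    obtain ⟨m, hm, F, hF⟩ := exists_strongSepRep H
    exact ⟨m, hm, F, hF⟩
  obtain ⟨hd1, F, hF⟩ := Nat.sInf_mem hne
  obtain ⟨⟨hinj, hsep⟩, hstrong⟩ := hF
  have hdn : strongSepDim H ≤ n := h
  set d := strongSepDim H with hd
  have key : ∀ i : Fin d, (fun j : Fin n => F (if h' : (j : ℕ) < d then ⟨j, h'⟩ else ⟨0, hd1⟩))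
      ⟨i, lt_of_lt_of_le i.isLt hdn⟩ = F i := by
    intro i
    simp only [i.isLt, dif_pos, Fin.eta]
    rfl
  refine ⟨fun j => F (if h' : (j : ℕ) < d then ⟨j, h'⟩ else ⟨0, hd1⟩), ⟨fun j => hinj _, ?_⟩, ?_⟩
  · intro v w x y h h' d1 d2 d3 d4
    obtain ⟨i, hi⟩ := hsep h h' d1 d2 d3 d4
    exact ⟨⟨i, lt_of_lt_of_le i.isLt hdn⟩, by rw [key i]; exact hi⟩
  · intro v w x h d1 d2
    obtain ⟨⟨i, hi⟩, ⟨j, hj⟩⟩ := hstrong h d1 d2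
    exact ⟨⟨⟨i, lt_of_lt_of_le i.isLt hdn⟩, by rw [key i]; exact hi⟩,
           ⟨⟨j, lt_of_lt_of_le j.isLt hdn⟩, by rw [key j]; exact hj⟩⟩

end Helpers


section Orbit

open Finset

lemma orbit_count {α : Type*} [Fintype α] [DecidableEq α]
    (p : Equiv.Perm α → Prop) [DecidablePred p] (ρ : Equiv.Perm α)
    (h : ∀ π, p π ∨ p (π * ρ) ∨ p (π * ρ * ρ)) :
    3 * (Finset.univ.filter (fun π => ¬ p π)).card ≤ 2 * Fintype.card (Equiv.Perm α) := by
  classical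
  have reidx : ∀ σ : Equiv.Perm α,
      (Finset.univ.filter (fun π => ¬ p (π * σ))).card
        = (Finset.univ.filter (fun π => ¬ p π)).card := by
    intro σ
    apply Finset.card_equiv (Equiv.mulRight σ)
    intro a
    simp [Equiv.mulRight]
  have hsum : (Finset.univ.filter (fun π => ¬ p π)).card
      + (Finset.univ.filter (fun π => ¬ p (π * ρ))).card
      + (Finset.univ.filter (fun π => ¬ p (π * ρ * ρ))).card
      = ∑ π : Equiv.Perm α, ((if ¬ p π then 1 else 0) + (if ¬ p (π * ρ) then 1 else 0)
          + (if ¬ p (π * ρ * ρ) then 1 else 0)) := by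
    rw [Finset.sum_add_distrib, Finset.sum_add_distrib]
    rw [Finset.card_filter, Finset.card_filter, Finset.card_filter]
  have hb : ∀ π : Equiv.Perm α, ((if ¬ p π then 1 else 0) + (if ¬ p (π * ρ) then 1 else 0)
      + (if ¬ p (π * ρ * ρ) then 1 else 0)) ≤ 2 := by
    intro π
    rcases h π with h' | h' | h' <;> split_ifs <;> omega
  have h2 : (3 : ℕ) * (Finset.univ.filter (fun π => ¬ p π)).card
      = (Finset.univ.filter (fun π => ¬ p π)).card
      + (Finset.univ.filter (fun π => ¬ p (π * ρ))).card
      + (Finset.univ.filter (fun π => ¬ p (π * ρ * ρ))).card := by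
    have r1 := reidx ρ
    have r2 : (Finset.univ.filter (fun π => ¬ p (π * ρ * ρ))).card
        = (Finset.univ.filter (fun π => ¬ p π)).card := by
      have := reidx (ρ * ρ)
      simpa [mul_assoc] using this
    omega
  rw [h2, hsum]
  calc ∑ π : Equiv.Perm α, ((if ¬ p π then 1 else 0) + (if ¬ p (π * ρ) then 1 else 0)
          + (if ¬ p (π * ρ * ρ) then 1 else 0))
      ≤ ∑ _π : Equiv.Perm α, 2 := Finset.sum_le_sum (fun π _ => hb π)
    _ = 2 * Fintype.card (Equiv.Perm α) := by
        rw [Finset.sum_const, Finset.card_univ, smul_eq_mul, mul_comm]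

set_option maxHeartbeats 1000000 in
/-- Arithmetic: purely linear fact about four distinct naturals and the three pairings. -/
lemma three_pairings (A B C D : ℕ) (h1 : A ≠ B) (h2 : A ≠ C) (h3 : A ≠ D)
    (h4 : B ≠ C) (h5 : B ≠ D) (h6 : C ≠ D) :
    ((A < C ∧ A < D ∧ B < C ∧ B < D) ∨ (C < A ∧ C < B ∧ D < A ∧ D < B)) ∨
    ((A < D ∧ A < B ∧ C < D ∧ C < B) ∨ (D < A ∧ D < C ∧ B < A ∧ B < C)) ∨
    ((A < B ∧ A < C ∧ D < B ∧ D < C) ∨ (B < A ∧ B < D ∧ C < A ∧ C < D)) := by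
  omega

lemma three_rotations_min (X A B : ℕ) (h1 : X ≠ A) (h2 : X ≠ B) (h3 : A ≠ B) :
    (X < A ∧ X < B) ∨ (A < B ∧ A < X) ∨ (B < X ∧ B < A) := by omega

lemma three_rotations_max (X A B : ℕ) (h1 : X ≠ A) (h2 : X ≠ B) (h3 : A ≠ B) :
    (A < X ∧ B < X) ∨ (B < A ∧ X < A) ∨ (X < B ∧ A < B) := by omega

end Orbit


instance sepDecidable {V : Type*} [DecidableEq ℕ] (f : V → ℕ) (v w x y : V) :
    Decidable (Separates f v w x y) := by
  unfold Separates; infer_instance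

section AuxFamily

open Finset

variable {k : ℕ}

private lemma val_ne {π : Equiv.Perm (Fin k)} {a b : Fin k} (h : a ≠ b) :
    ((π a : Fin k) : ℕ) ≠ ((π b : Fin k) : ℕ) :=
  fun hh => h (π.injective (Fin.val_injective hh))

lemma bad4_bound
    {a b c d : Fin k} (hab : a ≠ b) (hac : a ≠ c) (had : a ≠ d)
    (hbc : b ≠ c) (hbd : b ≠ d) (hcd : c ≠ d) :
    3 * (Finset.univ.filter (fun π : Equiv.Perm (Fin k) =>
      ¬ Separates (fun x => ((π x : Fin k) : ℕ)) a b c d)).card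
      ≤ 2 * Fintype.card (Equiv.Perm (Fin k)) := by
  set ρ : Equiv.Perm (Fin k) := Equiv.swap b c * Equiv.swap c d with hρ
  apply orbit_count _ ρ
  intro π
  have hρa : ρ a = a := by
    rw [hρ, Equiv.Perm.mul_apply, Equiv.swap_apply_of_ne_of_ne hac had,
      Equiv.swap_apply_of_ne_of_ne hab hac]
  have hρb : ρ b = c := by
    rw [hρ, Equiv.Perm.mul_apply, Equiv.swap_apply_of_ne_of_ne hbc hbd,
      Equiv.swap_apply_left]
  have hρc : ρ c = d := by
    rw [hρ, Equiv.Perm.mul_apply, Equiv.swap_apply_left,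
      Equiv.swap_apply_of_ne_of_ne (Ne.symm hbd) (Ne.symm hcd)]
  have hρd : ρ d = b := by
    rw [hρ, Equiv.Perm.mul_apply, Equiv.swap_apply_right, Equiv.swap_apply_right]
  simp only [Separates, Equiv.Perm.mul_apply, hρa, hρb, hρc, hρd]
  exact three_pairings _ _ _ _ (val_ne hab) (val_ne hac) (val_ne had)
    (val_ne hbc) (val_ne hbd) (val_ne hcd)

lemma badlo_bound
    {a b c : Fin k} (hab : a ≠ b) (hca : c ≠ a) (hcb : c ≠ b) :
    3 * (Finset.univ.filter (fun π : Equiv.Perm (Fin k) =>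
      ¬ (((π c : Fin k) : ℕ) < ((π a : Fin k) : ℕ) ∧ ((π c : Fin k) : ℕ) < ((π b : Fin k) : ℕ)))).card
      ≤ 2 * Fintype.card (Equiv.Perm (Fin k)) := by
  set ρ : Equiv.Perm (Fin k) := Equiv.swap c a * Equiv.swap a b with hρ
  apply orbit_count _ ρ
  intro π
  have hρa : ρ a = b := by
    rw [hρ, Equiv.Perm.mul_apply, Equiv.swap_apply_left,
      Equiv.swap_apply_of_ne_of_ne (Ne.symm hcb) (Ne.symm hab)]
  have hρb : ρ b = c := by
    rw [hρ, Equiv.Perm.mul_apply, Equiv.swap_apply_right, Equiv.swap_apply_right]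
  have hρc : ρ c = a := by
    rw [hρ, Equiv.Perm.mul_apply, Equiv.swap_apply_of_ne_of_ne hca hcb,
      Equiv.swap_apply_left]
  simp only [Equiv.Perm.mul_apply, hρa, hρb, hρc]
  exact three_rotations_min _ _ _ (val_ne hca) (val_ne hcb) (val_ne hab)

lemma badhi_bound
    {a b c : Fin k} (hab : a ≠ b) (hca : c ≠ a) (hcb : c ≠ b) :
    3 * (Finset.univ.filter (fun π : Equiv.Perm (Fin k) =>
      ¬ (((π a : Fin k) : ℕ) < ((π c : Fin k) : ℕ) ∧ ((π b : Fin k) : ℕ) < ((π c : Fin k) : ℕ)))).card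
      ≤ 2 * Fintype.card (Equiv.Perm (Fin k)) := by
  set ρ : Equiv.Perm (Fin k) := Equiv.swap c a * Equiv.swap a b with hρ
  apply orbit_count _ ρ
  intro π
  have hρa : ρ a = b := by
    rw [hρ, Equiv.Perm.mul_apply, Equiv.swap_apply_left,
      Equiv.swap_apply_of_ne_of_ne (Ne.symm hcb) (Ne.symm hab)]
  have hρb : ρ b = c := by
    rw [hρ, Equiv.Perm.mul_apply, Equiv.swap_apply_right, Equiv.swap_apply_right]
  have hρc : ρ c = a := by
    rw [hρ, Equiv.Perm.mul_apply, Equiv.swap_apply_of_ne_of_ne hca hcb,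
      Equiv.swap_apply_left]
  simp only [Equiv.Perm.mul_apply, hρa, hρb, hρc]
  exact three_rotations_max _ _ _ (val_ne hca) (val_ne hcb) (val_ne hab)

lemma aux_arith (k m : ℕ) (hk : 2 ≤ k) (hkm : k ≤ 2 ^ m) (hm : 1 ≤ m) :
    2 * k ^ 4 * 2 ^ (10 * m) < 3 ^ (10 * m) := by
  have h1 : 2 * k ^ 4 * 2 ^ (10 * m) ≤ 2 * (2 ^ m) ^ 4 * 2 ^ (10 * m) := by
    have := Nat.pow_le_pow_left hkm 4
    exact Nat.mul_le_mul_right _ (Nat.mul_le_mul_left 2 this)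
  have h2 : 2 * ((2:ℕ) ^ m) ^ 4 * 2 ^ (10 * m) = 2 ^ (14 * m + 1) := by
    rw [← pow_mul, mul_assoc, ← pow_add, ← pow_succ']
    congr 1
    omega
  have h3 : (2:ℕ) ^ (14 * m + 1) ≤ 2 ^ (15 * m) :=
    Nat.pow_le_pow_right (by norm_num) (by omega)
  have h4 : (2:ℕ) ^ (15 * m) = 32768 ^ m := by
    rw [pow_mul]; norm_num
  have h5 : (32768:ℕ) ^ m < 59049 ^ m :=
    Nat.pow_lt_pow_left (by norm_num) (by omega)
  have h6 : (59049:ℕ) ^ m = 3 ^ (10 * m) := by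
    rw [pow_mul]; norm_num
  omega

lemma ten_clog_le_log (k : ℕ) (hk : 2 ≤ k) :
    ((10 * Nat.clog 2 k : ℕ) : ℝ) ≤ 20 * Real.log k := by
  have hm1 : 1 ≤ Nat.clog 2 k := Nat.clog_pos (by norm_num) hk
  have hkR : (2:ℝ) ≤ (k:ℝ) := by exact_mod_cast hk
  have hk0 : (0:ℝ) < k := by linarith
  have hlog2 : (0.6931471803:ℝ) < Real.log 2 := Real.log_two_gt_d9
  suffices h : (Nat.clog 2 k : ℝ) ≤ 2 * Real.log k by push_cast; push_cast at h; linarith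
  set m := Nat.clog 2 k with hmdef
  have hlow : (2:ℕ) ^ (m - 1) < k := by
    have := Nat.pow_pred_clog_lt_self (by norm_num : 1 < 2) (x := k) hk
    simpa [Nat.pred_eq_sub_one] using this
  by_cases h4 : 4 ≤ m
  · have hlowR : ((2:ℝ)) ^ (m - 1) < (k:ℝ) := by exact_mod_cast hlow
    have hlogk : ((m - 1 : ℕ) : ℝ) * Real.log 2 ≤ Real.log k := by
      have := Real.log_le_log (by positivity) hlowR.le
      rwa [Real.log_pow] at this
    have hcast : ((m - 1 : ℕ) : ℝ) = (m : ℝ) - 1 := by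
      rw [Nat.cast_sub hm1, Nat.cast_one]
    rw [hcast] at hlogk
    have hm4 : (4:ℝ) ≤ (m:ℝ) := by exact_mod_cast h4
    nlinarith
  · have hm3 : m = 1 ∨ m = 2 ∨ m = 3 := by omega
    rcases hm3 with hm | hm | hm
    · rw [hm]
      have : Real.log 2 ≤ Real.log k := Real.log_le_log (by norm_num) hkR
      simp only [Nat.cast_one]
      linarith
    · rw [hm] at hlow ⊢
      have hk3 : (3:ℝ) ≤ (k:ℝ) := by exact_mod_cast (by omega : 3 ≤ k)
      have he : Real.exp 1 ≤ (k:ℝ) := by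
        have := Real.exp_one_lt_d9; linarith
      have h1 : (1:ℝ) ≤ Real.log k := (Real.le_log_iff_exp_le hk0).mpr he
      simp only [Nat.cast_ofNat]
      linarith
    · rw [hm] at hlow ⊢
      have hk5 : (5:ℝ) ≤ (k:ℝ) := by exact_mod_cast (by omega : 5 ≤ k)
      have hexp3 : Real.exp 3 < 25 := by
        have h1 : Real.exp 1 ^ (3:ℕ) = Real.exp ((3:ℕ):ℝ) := Real.exp_one_pow 3
        have h2 : Real.exp 1 ^ (3:ℕ) < 2.7182818286 ^ (3:ℕ) := by
          apply pow_lt_pow_left₀ Real.exp_one_lt_d9 (Real.exp_pos 1).le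
          norm_num
        have h3 : (2.7182818286:ℝ) ^ (3:ℕ) < 25 := by norm_num
        have : ((3:ℕ):ℝ) = (3:ℝ) := by norm_num
        rw [this] at h1
        linarith
      have hsq : Real.exp (3/2) * Real.exp (3/2) = Real.exp 3 := by
        rw [← Real.exp_add]; norm_num
      have h32 : Real.exp (3/2) ≤ 5 := by
        nlinarith [Real.exp_pos (3/2)]
      have : (3/2:ℝ) ≤ Real.log k := (Real.le_log_iff_exp_le hk0).mpr (le_trans h32 hk5)
      simp only [Nat.cast_ofNat]
      linarith

end AuxFamily

section Assemble

open Finset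

lemma exists_aux_family (k : ℕ) (hk : 2 ≤ k) :
    ∃ (M : ℕ) (σ : Fin M → Fin k → ℕ),
      ((M : ℝ) ≤ 20 * Real.log k) ∧
      (∀ i, Function.Injective (σ i)) ∧
      (∀ a b c d : Fin k, a ≠ b → a ≠ c → a ≠ d → b ≠ c → b ≠ d → c ≠ d →
        ∃ i, Separates (σ i) a b c d) ∧
      (∀ a b c : Fin k, a ≠ b → c ≠ a → c ≠ b →
        (∃ i, σ i c < σ i a ∧ σ i c < σ i b) ∧ (∃ i, σ i a < σ i c ∧ σ i b < σ i c)) := by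
  classical
  set m := Nat.clog 2 k with hmdef
  set M := 10 * m with hMdef
  have hm1 : 1 ≤ m := Nat.clog_pos (by norm_num) hk
  have hkm : k ≤ 2 ^ m := Nat.le_pow_clog (by norm_num) k
  set P := Equiv.Perm (Fin k) with hP
  set F := Fintype.card P with hF
  have hF0 : 0 < F := Fintype.card_pos
  -- bad sets per constraint
  set bad4 : Fin k × Fin k × Fin k × Fin k → Finset P := fun q =>
    univ.filter (fun π => ¬ Separates (fun x => ((π x : Fin k) : ℕ)) q.1 q.2.1 q.2.2.1 q.2.2.2)
    with hbad4
  set badlo : Fin k × Fin k × Fin k → Finset P := fun q =>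
    univ.filter (fun π => ¬ (((π q.2.2 : Fin k) : ℕ) < ((π q.1 : Fin k) : ℕ) ∧
      ((π q.2.2 : Fin k) : ℕ) < ((π q.2.1 : Fin k) : ℕ))) with hbadlo
  set badhi : Fin k × Fin k × Fin k → Finset P := fun q =>
    univ.filter (fun π => ¬ (((π q.1 : Fin k) : ℕ) < ((π q.2.2 : Fin k) : ℕ) ∧
      ((π q.2.1 : Fin k) : ℕ) < ((π q.2.2 : Fin k) : ℕ))) with hbadhi
  set Γ4 : Finset (Fin k × Fin k × Fin k × Fin k) :=
    univ.filter (fun q => q.1 ≠ q.2.1 ∧ q.1 ≠ q.2.2.1 ∧ q.1 ≠ q.2.2.2 ∧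
      q.2.1 ≠ q.2.2.1 ∧ q.2.1 ≠ q.2.2.2 ∧ q.2.2.1 ≠ q.2.2.2) with hΓ4
  set Γ3 : Finset (Fin k × Fin k × Fin k) :=
    univ.filter (fun q => q.1 ≠ q.2.1 ∧ q.2.2 ≠ q.1 ∧ q.2.2 ≠ q.2.1) with hΓ3
  set B4 : Fin k × Fin k × Fin k × Fin k → Finset (Fin M → P) := fun q =>
    Fintype.piFinset (fun _ => bad4 q) with hB4
  set Blo : Fin k × Fin k × Fin k → Finset (Fin M → P) := fun q =>
    Fintype.piFinset (fun _ => badlo q) with hBlo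
  set Bhi : Fin k × Fin k × Fin k → Finset (Fin M → P) := fun q =>
    Fintype.piFinset (fun _ => badhi q) with hBhi
  set BadU : Finset (Fin M → P) := (Γ4.biUnion B4 ∪ Γ3.biUnion Blo) ∪ Γ3.biUnion Bhi with hBadU
  -- cardinality bounds
  have hpicard : ∀ (B : Finset P), (Fintype.piFinset (fun _ : Fin M => B)).card = B.card ^ M := by
    intro B
    rw [Fintype.card_piFinset]
    simp
  have hterm : ∀ (B : Finset P), 3 * B.card ≤ 2 * F → B.card ^ M * 3 ^ M ≤ (2 * F) ^ M := by
    intro B hB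
    rw [← mul_pow]
    exact Nat.pow_le_pow_left (by omega) M
  have hsum4 : (Γ4.biUnion B4).card * 3 ^ M ≤ Γ4.card * (2 * F) ^ M := by
    calc (Γ4.biUnion B4).card * 3 ^ M ≤ (∑ q ∈ Γ4, (B4 q).card) * 3 ^ M :=
          Nat.mul_le_mul_right _ Finset.card_biUnion_le
      _ = ∑ q ∈ Γ4, ((B4 q).card * 3 ^ M) := by rw [Finset.sum_mul]
      _ ≤ ∑ _q ∈ Γ4, (2 * F) ^ M := by
          apply Finset.sum_le_sum
          intro q hq
          rw [hΓ4, Finset.mem_filter] at hq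
          obtain ⟨-, h1, h2, h3, h4, h5, h6⟩ := hq
          rw [hB4, hpicard]
          exact hterm _ (bad4_bound h1 h2 h3 h4 h5 h6)
      _ = Γ4.card * (2 * F) ^ M := by rw [Finset.sum_const, smul_eq_mul]
  have hsumlo : (Γ3.biUnion Blo).card * 3 ^ M ≤ Γ3.card * (2 * F) ^ M := by
    calc (Γ3.biUnion Blo).card * 3 ^ M ≤ (∑ q ∈ Γ3, (Blo q).card) * 3 ^ M :=
          Nat.mul_le_mul_right _ Finset.card_biUnion_le
      _ = ∑ q ∈ Γ3, ((Blo q).card * 3 ^ M) := by rw [Finset.sum_mul]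
      _ ≤ ∑ _q ∈ Γ3, (2 * F) ^ M := by
          apply Finset.sum_le_sum
          intro q hq
          rw [hΓ3, Finset.mem_filter] at hq
          obtain ⟨-, h1, h2, h3⟩ := hq
          rw [hBlo, hpicard]
          exact hterm _ (badlo_bound h1 h2 h3)
      _ = Γ3.card * (2 * F) ^ M := by rw [Finset.sum_const, smul_eq_mul]
  have hsumhi : (Γ3.biUnion Bhi).card * 3 ^ M ≤ Γ3.card * (2 * F) ^ M := by
    calc (Γ3.biUnion Bhi).card * 3 ^ M ≤ (∑ q ∈ Γ3, (Bhi q).card) * 3 ^ M :=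
          Nat.mul_le_mul_right _ Finset.card_biUnion_le
      _ = ∑ q ∈ Γ3, ((Bhi q).card * 3 ^ M) := by rw [Finset.sum_mul]
      _ ≤ ∑ _q ∈ Γ3, (2 * F) ^ M := by
          apply Finset.sum_le_sum
          intro q hq
          rw [hΓ3, Finset.mem_filter] at hq
          obtain ⟨-, h1, h2, h3⟩ := hq
          rw [hBhi, hpicard]
          exact hterm _ (badhi_bound h1 h2 h3)
      _ = Γ3.card * (2 * F) ^ M := by rw [Finset.sum_const, smul_eq_mul]
  have hΓ4card : Γ4.card ≤ k ^ 4 := by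
    calc Γ4.card ≤ (univ : Finset (Fin k × Fin k × Fin k × Fin k)).card :=
          Finset.card_filter_le _ _
      _ = k ^ 4 := by simp [Finset.card_univ]; ring
  have hΓ3card : Γ3.card ≤ k ^ 3 := by
    calc Γ3.card ≤ (univ : Finset (Fin k × Fin k × Fin k)).card := Finset.card_filter_le _ _
      _ = k ^ 3 := by simp [Finset.card_univ]; ring
  have hBadUcard : BadU.card * 3 ^ M ≤ (k ^ 4 + 2 * k ^ 3) * (2 * F) ^ M := by
    have hu1 : BadU.card ≤ (Γ4.biUnion B4).card + (Γ3.biUnion Blo).card + (Γ3.biUnion Bhi).card := by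
      calc BadU.card ≤ ((Γ4.biUnion B4) ∪ (Γ3.biUnion Blo)).card + (Γ3.biUnion Bhi).card :=
            Finset.card_union_le _ _
        _ ≤ (Γ4.biUnion B4).card + (Γ3.biUnion Blo).card + (Γ3.biUnion Bhi).card := by
            have := Finset.card_union_le (Γ4.biUnion B4) (Γ3.biUnion Blo)
            omega
    calc BadU.card * 3 ^ M
        ≤ ((Γ4.biUnion B4).card + (Γ3.biUnion Blo).card + (Γ3.biUnion Bhi).card) * 3 ^ M :=
          Nat.mul_le_mul_right _ hu1
      _ = (Γ4.biUnion B4).card * 3 ^ M + (Γ3.biUnion Blo).card * 3 ^ M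
          + (Γ3.biUnion Bhi).card * 3 ^ M := by ring
      _ ≤ Γ4.card * (2 * F) ^ M + Γ3.card * (2 * F) ^ M + Γ3.card * (2 * F) ^ M := by
          omega
      _ ≤ k ^ 4 * (2 * F) ^ M + k ^ 3 * (2 * F) ^ M + k ^ 3 * (2 * F) ^ M := by
          have := Nat.mul_le_mul_right ((2*F)^M) hΓ4card
          have := Nat.mul_le_mul_right ((2*F)^M) hΓ3card
          omega
      _ = (k ^ 4 + 2 * k ^ 3) * (2 * F) ^ M := by ring
  have hstrict : BadU.card < F ^ M := by
    have harith := aux_arith k m hk hkm hm1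
    have h2k : k ^ 4 + 2 * k ^ 3 ≤ 2 * k ^ 4 := by nlinarith
    have hmain : BadU.card * 3 ^ M < F ^ M * 3 ^ M := by
      calc BadU.card * 3 ^ M ≤ (k ^ 4 + 2 * k ^ 3) * (2 * F) ^ M := hBadUcard
        _ ≤ 2 * k ^ 4 * (2 * F) ^ M := Nat.mul_le_mul_right _ h2k
        _ = 2 * k ^ 4 * 2 ^ M * F ^ M := by rw [mul_pow]; ring
        _ < 3 ^ M * F ^ M := by
            apply mul_lt_mul_of_pos_right ?_ (pow_pos hF0 M)
            rw [hMdef]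
            exact harith
        _ = F ^ M * 3 ^ M := by ring
    exact Nat.lt_of_mul_lt_mul_right hmain
  have homega : ∃ ω : Fin M → P, ω ∉ BadU := by
    by_contra hcon
    push_neg at hcon
    have : (univ : Finset (Fin M → P)) ⊆ BadU := fun ω _ => hcon ω
    have hc := Finset.card_le_card this
    rw [Finset.card_univ, Fintype.card_fun] at hc
    simp only [Fintype.card_fin] at hc
    rw [← hF] at hc
    omega
  obtain ⟨ω, hω⟩ := homega
  refine ⟨M, fun i x => ((ω i x : Fin k) : ℕ), ?_, ?_, ?_, ?_⟩
  · rw [hMdef, hmdef]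
    exact ten_clog_le_log k hk
  · intro i x y hxy
    exact (ω i).injective (Fin.val_injective hxy)
  · intro a b c d h1 h2 h3 h4 h5 h6
    have hmem : (a, b, c, d) ∈ Γ4 := by
      rw [hΓ4, Finset.mem_filter]
      exact ⟨Finset.mem_univ _, h1, h2, h3, h4, h5, h6⟩
    have : ω ∉ B4 (a, b, c, d) := by
      intro hin
      exact hω (Finset.mem_union_left _ (Finset.mem_union_left _
        (Finset.mem_biUnion.mpr ⟨_, hmem, hin⟩)))
    rw [hB4, Fintype.mem_piFinset] at this
    push_neg at this
    obtain ⟨i, hi⟩ := this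
    rw [hbad4, Finset.mem_filter] at hi
    push_neg at hi
    exact ⟨i, hi (Finset.mem_univ _)⟩
  · intro a b c h1 h2 h3
    have hmem : (a, b, c) ∈ Γ3 := by
      rw [hΓ3, Finset.mem_filter]
      exact ⟨Finset.mem_univ _, h1, h2, h3⟩
    constructor
    · have : ω ∉ Blo (a, b, c) := by
        intro hin
        exact hω (Finset.mem_union_left _ (Finset.mem_union_right _
          (Finset.mem_biUnion.mpr ⟨_, hmem, hin⟩)))
      rw [hBlo, Fintype.mem_piFinset] at this
      push_neg at this
      obtain ⟨i, hi⟩ := this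
      rw [hbadlo, Finset.mem_filter] at hi
      push_neg at hi
      obtain ⟨hc1, hc2⟩ := hi (Finset.mem_univ _)
      exact ⟨i, hc1, hc2⟩
    · have : ω ∉ Bhi (a, b, c) := by
        intro hin
        exact hω (Finset.mem_union_right _ (Finset.mem_biUnion.mpr ⟨_, hmem, hin⟩))
      rw [hBhi, Fintype.mem_piFinset] at this
      push_neg at this
      obtain ⟨i, hi⟩ := this
      rw [hbadhi, Finset.mem_filter] at hi
      push_neg at hi
      obtain ⟨hc1, hc2⟩ := hi (Finset.mem_univ _)
      exact ⟨i, hc1, hc2⟩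

end Assemble


lemma exists_matching (k : ℕ) (hk : 2 ≤ k) (hke : Even k) :
    ∃ ν : ZMod (k-1) → Fin k → Fin k,
      (∀ r i, ν r i ≠ i) ∧
      (∀ r i, ν r (ν r i) = i) ∧
      (∀ i j : Fin k, i ≠ j → ∃ r, ν r i = j) := by
  classical
  haveI : NeZero (k - 1) := ⟨by omega⟩
  set m := k - 1 with hm
  have hmk : m < k := by omega
  have hodd : Odd m := Nat.Even.sub_odd (by omega) hke odd_one
  have hcop : Nat.Coprime 2 m := Nat.coprime_two_left.mpr hodd
  have hunit : IsUnit (2 : ZMod m) := by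
    have := (ZMod.isUnit_iff_coprime 2 m).mpr hcop
    simpa using this
  set inv2 : ZMod m := (2 : ZMod m)⁻¹ with hinv2
  have h2inv : (2 : ZMod m) * inv2 = 1 := ZMod.mul_inv_of_unit _ hunit
  have hinv2' : inv2 * 2 = 1 := by rw [mul_comm]; exact h2inv
  have hvlt : ∀ z : ZMod m, z.val < m := fun z => ZMod.val_lt z
  set ofZ : ZMod m → Fin k := fun z => ⟨z.val, lt_trans (hvlt z) hmk⟩ with hofZ
  have hofval : ∀ z : ZMod m, (ofZ z).val = z.val := fun z => rfl
  have hround : ∀ z : ZMod m, (((ofZ z).val : ℕ) : ZMod m) = z := by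
    intro z
    rw [hofval]
    exact ZMod.natCast_rightInverse z
  have hc : ∀ i : Fin k, i.val < m → (((i.val : ℕ) : ZMod m)).val = i.val := by
    intro i hi
    exact ZMod.val_cast_of_lt hi
  set ν : ZMod m → Fin k → Fin k := fun r i =>
    if i.val = m then ofZ (inv2 * r)
    else if ((i.val : ℕ) : ZMod m) * 2 = r then ⟨m, hmk⟩
    else ofZ (r - ((i.val : ℕ) : ZMod m)) with hν
  have hlt : ∀ i : Fin k, i.val ≠ m → i.val < m := by
    intro i hi
    have := i.isLt
    omega
  have hbI : ∀ (r : ZMod m) (i : Fin k), i.val = m → ν r i = ofZ (inv2 * r) := by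
    intro r i hi
    show (if i.val = m then _ else _) = _
    rw [if_pos hi]
  have hbS : ∀ (r : ZMod m) (i : Fin k), i.val ≠ m → ((i.val : ℕ) : ZMod m) * 2 = r →
      ν r i = ⟨m, hmk⟩ := by
    intro r i hi hsp
    show (if i.val = m then _ else _) = _
    rw [if_neg hi, if_pos hsp]
  have hbG : ∀ (r : ZMod m) (i : Fin k), i.val ≠ m → ¬(((i.val : ℕ) : ZMod m) * 2 = r) →
      ν r i = ofZ (r - ((i.val : ℕ) : ZMod m)) := by
    intro r i hi hsp
    show (if i.val = m then _ else _) = _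
    rw [if_neg hi, if_neg hsp]
  refine ⟨ν, ?_, ?_, ?_⟩
  · -- fixed-point free
    intro r i
    by_cases hi : i.val = m
    · rw [hbI r i hi]
      intro hcon
      have hval := congrArg Fin.val hcon
      rw [hofval] at hval
      have := hvlt (inv2 * r)
      omega
    · by_cases hsp : ((i.val : ℕ) : ZMod m) * 2 = r
      · rw [hbS r i hi hsp]
        intro hcon
        have hval := congrArg Fin.val hcon
        exact hi hval.symm
      · rw [hbG r i hi hsp]
        intro hcon
        have hval := congrArg Fin.val hcon
        rw [hofval] at hval
        apply hsp
        have h2 : (((r - ((i.val : ℕ) : ZMod m)).val : ℕ) : ZMod m)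
            = ((i.val : ℕ) : ZMod m) := by rw [hval]
        rw [ZMod.natCast_rightInverse] at h2
        linear_combination - h2
  · -- involution
    intro r i
    by_cases hi : i.val = m
    · rw [hbI r i hi]
      have hne : (ofZ (inv2 * r)).val ≠ m := Nat.ne_of_lt (hvlt _)
      have hsp : (((ofZ (inv2 * r)).val : ℕ) : ZMod m) * 2 = r := by
        rw [hround]
        calc inv2 * r * 2 = r * (inv2 * 2) := by ring
          _ = r := by rw [hinv2']; ring
      rw [hbS r _ hne hsp]
      exact Fin.ext (by simp [hi])
    · by_cases hsp : ((i.val : ℕ) : ZMod m) * 2 = r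
      · rw [hbS r i hi hsp]
        have h2 : ν r ⟨m, hmk⟩ = ofZ (inv2 * r) := hbI r _ rfl
        rw [h2]
        apply Fin.ext
        rw [hofval]
        have h3 : inv2 * r = ((i.val : ℕ) : ZMod m) := by
          rw [← hsp]
          calc inv2 * (((i.val : ℕ) : ZMod m) * 2) = ((i.val : ℕ) : ZMod m) * (inv2 * 2) := by
                ring
            _ = ((i.val : ℕ) : ZMod m) := by rw [hinv2']; ring
        rw [h3]
        exact hc i (hlt i hi)
      · rw [hbG r i hi hsp]
        have hne : (ofZ (r - ((i.val : ℕ) : ZMod m))).val ≠ m := Nat.ne_of_lt (hvlt _)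
        have hsp2 : ¬((((ofZ (r - ((i.val : ℕ) : ZMod m))).val : ℕ) : ZMod m) * 2 = r) := by
          rw [hround]
          intro hcon
          apply hsp
          linear_combination - hcon
        rw [hbG r _ hne hsp2, hround]
        apply Fin.ext
        rw [hofval]
        have h3 : r - (r - ((i.val : ℕ) : ZMod m)) = ((i.val : ℕ) : ZMod m) := by ring
        rw [h3]
        exact hc i (hlt i hi)
  · -- completeness
    intro i j hij
    by_cases hi : i.val = m
    · have hj : j.val < m := by
        apply hlt
        intro hcon
        exact hij (Fin.ext (by rw [hi, hcon]))
      refine ⟨((j.val : ℕ) : ZMod m) * 2, ?_⟩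
      rw [hbI _ i hi]
      apply Fin.ext
      rw [hofval]
      have h3 : inv2 * (((j.val : ℕ) : ZMod m) * 2) = ((j.val : ℕ) : ZMod m) := by
        calc inv2 * (((j.val : ℕ) : ZMod m) * 2) = ((j.val : ℕ) : ZMod m) * (inv2 * 2) := by ring
          _ = _ := by rw [hinv2']; ring
      rw [h3]
      exact hc j hj
    · by_cases hj : j.val = m
      · refine ⟨((i.val : ℕ) : ZMod m) * 2, ?_⟩
        rw [hbS _ i hi rfl]
        exact Fin.ext (by simp [hj])
      · refine ⟨((i.val : ℕ) : ZMod m) + ((j.val : ℕ) : ZMod m), ?_⟩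
        have hspec : ¬(((i.val : ℕ) : ZMod m) * 2
            = ((i.val : ℕ) : ZMod m) + ((j.val : ℕ) : ZMod m)) := by
          intro hcon
          have h4 : ((i.val : ℕ) : ZMod m) = ((j.val : ℕ) : ZMod m) := by
            linear_combination hcon
          have hval := congrArg ZMod.val h4
          rw [hc i (hlt i hi), hc j (hlt j hj)] at hval
          exact hij (Fin.ext hval)
        rw [hbG _ i hi hspec]
        apply Fin.ext
        rw [hofval]
        have h4 : ((i.val : ℕ) : ZMod m) + ((j.val : ℕ) : ZMod m) - ((i.val : ℕ) : ZMod m)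
            = ((j.val : ℕ) : ZMod m) := by ring
        rw [h4]
        exact hc j (hlt j hj)


set_option maxHeartbeats 1600000 in
/-- Fix integers `s, t, k ≥ 2` with `k` even. If `G` has a vertex partition
`V_1, …, V_k` such that each induced subgraph `G[V_i]` has strong separation dimension
at most `s` and each bipartite subgraph `G[V_i, V_j]` (`i ≠ j`) has strong separation
dimension at most `t`, then `G` has strong separation dimension at most
`2s + (k-1)t + 20 log k`. -/
theorem strongSepDim_partition {V : Type*} [Fintype V] (G : SimpleGraph V)
    (s t k : ℕ) (hs : 2 ≤ s) (ht : 2 ≤ t) (hk : 2 ≤ k) (hkeven : Even k)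
    (P : Fin k → Set V)
    (hdisj : ∀ i j, i ≠ j → Disjoint (P i) (P j))
    (hcover : ∀ v, ∃ i, v ∈ P i)
    (hind : ∀ i, strongSepDim (G.induce (P i)) ≤ s)
    (hcross : ∀ i j, i ≠ j → strongSepDim (crossGraph G (P i) (P j)) ≤ t) :
    (strongSepDim G : ℝ) ≤ 2 * s + ((k : ℝ) - 1) * t + 20 * Real.log k := by
  classical
  haveI hNZ : NeZero (k - 1) := ⟨by omega⟩
  choose p hp using hcover
  have hpu : ∀ (v : V) (i : Fin k), v ∈ P i → p v = i := by
    intro v i hv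
    by_contra hne
    exact Set.disjoint_left.mp (hdisj _ _ hne) (hp v) hv
  obtain ⟨ν, hνne, hνinv, hνcomp⟩ := exists_matching k hk hkeven
  obtain ⟨M, σ, hMle, hσinj, hσ4, hσ3⟩ := exists_aux_family k hk
  have hindrep : ∀ i : Fin k, ∃ F : Fin s → ↥(P i) → ℕ, IsStrongSepRep (G.induce (P i)) F :=
    fun i => exists_rep_of_le _ (by omega) (hind i)
  choose f hf using hindrep
  have hcrossrep : ∀ (i j : Fin k), i ≠ j →
      ∃ F : Fin t → ↥(P i ∪ P j) → ℕ, IsStrongSepRep (crossGraph G (P i) (P j)) F :=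
    fun i j h => exists_rep_of_le _ (by omega) (hcross i j h)
  choose g hg using hcrossrep
  -- block helpers
  have hblock : ∀ (r : ZMod (k-1)) (q u : Fin k), u = q ∨ u = ν r q →
      min u (ν r u) = min q (ν r q) ∧ max u (ν r u) = max q (ν r q) := by
    intro r q u hu
    rcases hu with h | h
    · rw [h]; exact ⟨rfl, rfl⟩
    · rw [h, hνinv]; exact ⟨min_comm _ _, max_comm _ _⟩
  have hsameblock : ∀ (r : ZMod (k-1)) (q u : Fin k),
      min u (ν r u) = min q (ν r q) → u = q ∨ u = ν r q := by
    intro r q u hmin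
    rcases min_cases u (ν r u) with ⟨h1, _⟩ | ⟨h1, _⟩ <;>
      rcases min_cases q (ν r q) with ⟨h2, _⟩ | ⟨h2, _⟩ <;> rw [h1, h2] at hmin
    · exact Or.inl hmin
    · exact Or.inr hmin
    · right
      rw [← hmin, hνinv]
    · left
      have := congrArg (ν r) hmin
      rwa [hνinv, hνinv] at this
  have hminne : ∀ (r : ZMod (k-1)) (q : Fin k), min q (ν r q) ≠ max q (ν r q) := by
    intro r q
    rcases le_total q (ν r q) with h | h
    · rw [min_eq_left h, max_eq_right h]
      exact fun hc => (hνne r q) hc.symm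
    · rw [min_eq_right h, max_eq_left h]
      exact hνne r q
  have hmemB : ∀ (r : ZMod (k-1)) (q : Fin k) (u : V), p u = q ∨ p u = ν r q →
      u ∈ P (min q (ν r q)) ∪ P (max q (ν r q)) := by
    intro r q u hu
    have h1 : p u = min q (ν r q) ∨ p u = max q (ν r q) := by
      rcases le_total q (ν r q) with h | h
      · rw [min_eq_left h, max_eq_right h]; exact hu
      · rw [min_eq_right h, max_eq_left h]; exact hu.symm
    rcases h1 with h | h
    · exact Set.mem_union_left _ (by rw [← h]; exact hp u)
    · exact Set.mem_union_right _ (by rw [← h]; exact hp u)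
  have hcrossAdj : ∀ (i0 j0 : Fin k) (v w : V) (hv : v ∈ P i0 ∪ P j0) (hw : w ∈ P i0 ∪ P j0),
      G.Adj v w → ((p v = i0 ∧ p w = j0) ∨ (p v = j0 ∧ p w = i0)) →
      (crossGraph G (P i0) (P j0)).Adj ⟨v, hv⟩ ⟨w, hw⟩ := by
    intro i0 j0 v w hv hw hadj hor
    refine ⟨hadj, ?_⟩
    rcases hor with ⟨h1, h2⟩ | ⟨h1, h2⟩
    · exact Or.inl ⟨by show v ∈ P i0; rw [← h1]; exact hp v,
        by show w ∈ P j0; rw [← h2]; exact hp w⟩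
    · exact Or.inr ⟨by show v ∈ P j0; rw [← h1]; exact hp v,
        by show w ∈ P i0; rw [← h2]; exact hp w⟩
  have hor_of : ∀ (r : ZMod (k-1)) (q q' : Fin k), q' = ν r q →
      (q = min q (ν r q) ∧ q' = max q (ν r q)) ∨ (q = max q (ν r q) ∧ q' = min q (ν r q)) := by
    intro r q q' hq'
    rcases le_total q (ν r q) with h | h
    · left; rw [hq']; exact ⟨(min_eq_left h).symm, (max_eq_right h).symm⟩
    · right; rw [hq']; exact ⟨(max_eq_left h).symm, (min_eq_right h).symm⟩
  -- total inner functions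
  set Fp : Fin k → Fin s → V → ℕ :=
    fun i a v => if h : v ∈ P i then f i a ⟨v, h⟩ else 0 with hFp
  set Gp : Fin k → Fin k → Fin t → V → ℕ := fun i j b v =>
    if h : i ≠ j then (if hv : v ∈ P i ∪ P j then g i j h b ⟨v, hv⟩ else 0) else 0 with hGp
  have hFpval : ∀ (i : Fin k) (a : Fin s) (v : V) (hv : v ∈ P i), Fp i a v = f i a ⟨v, hv⟩ := by
    intro i a v hv
    rw [hFp]
    simp only [dif_pos hv]
  have hGpval : ∀ (i j : Fin k) (hij : i ≠ j) (b : Fin t) (v : V) (hv : v ∈ P i ∪ P j),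
      Gp i j b v = g i j hij b ⟨v, hv⟩ := by
    intro i j hij b v hv
    rw [hGp]
    simp only [dif_pos hij, dif_pos hv]
  -- the family
  set F : (Fin s × Bool) ⊕ ((ZMod (k-1) × Fin t) ⊕ Fin M) → V → ℕ := fun idx =>
    match idx with
    | Sum.inl (a, dir) =>
        mix (fun v => if dir then (p v).val else k - 1 - (p v).val) (fun v => Fp (p v) a v)
    | Sum.inr (Sum.inl (r, b)) =>
        mix (fun v => (min (p v) (ν r (p v))).val)
          (fun v => Gp (min (p v) (ν r (p v))) (max (p v) (ν r (p v))) b v)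
    | Sum.inr (Sum.inr c) =>
        mix (fun v => σ c (p v)) (fun v => ((Fintype.equivFin V) v : ℕ))
    with hFdef
  -- transfer lemmas
  have hA_in : ∀ (a : Fin s) (q : Fin k) (u u' : V) (hu : u ∈ P q) (hu' : u' ∈ P q),
      f q a ⟨u, hu⟩ < f q a ⟨u', hu'⟩ →
      F (Sum.inl (a, true)) u < F (Sum.inl (a, true)) u' := by
    intro a q u u' hu hu' hlt
    show mix (fun v => (p v).val) (fun v => Fp (p v) a v) u
      < mix (fun v => (p v).val) (fun v => Fp (p v) a v) u'
    refine (mix_lt_iff_of_eq ?_).mpr ?_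
    · show (p u).val = (p u').val
      rw [hpu u q hu, hpu u' q hu']
    · show Fp (p u) a u < Fp (p u') a u'
      rw [hpu u q hu, hpu u' q hu', hFpval q a u hu, hFpval q a u' hu']
      exact hlt
  have hA_cl : ∀ (a : Fin s) (u u' : V), (p u).val < (p u').val →
      F (Sum.inl (a, true)) u < F (Sum.inl (a, true)) u' := by
    intro a u u' hlt
    show mix (fun v => (p v).val) (fun v => Fp (p v) a v) u
      < mix (fun v => (p v).val) (fun v => Fp (p v) a v) u'
    exact mix_lt_of_lt hlt
  have hA_cl' : ∀ (a : Fin s) (u u' : V), (p u').val < (p u).val →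
      F (Sum.inl (a, false)) u < F (Sum.inl (a, false)) u' := by
    intro a u u' hlt
    show mix (fun v => k - 1 - (p v).val) (fun v => Fp (p v) a v) u
      < mix (fun v => k - 1 - (p v).val) (fun v => Fp (p v) a v) u'
    refine mix_lt_of_lt ?_
    show k - 1 - (p u).val < k - 1 - (p u').val
    have h1 := (p u).isLt
    have h2 := (p u').isLt
    omega
  have hB_in : ∀ (r : ZMod (k-1)) (b : Fin t) (q : Fin k) (u u' : V)
      (hu1 : p u = q ∨ p u = ν r q) (hu1' : p u' = q ∨ p u' = ν r q)
      (hu : u ∈ P (min q (ν r q)) ∪ P (max q (ν r q)))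
      (hu' : u' ∈ P (min q (ν r q)) ∪ P (max q (ν r q))),
      g (min q (ν r q)) (max q (ν r q)) (hminne r q) b ⟨u, hu⟩
        < g (min q (ν r q)) (max q (ν r q)) (hminne r q) b ⟨u', hu'⟩ →
      F (Sum.inr (Sum.inl (r, b))) u < F (Sum.inr (Sum.inl (r, b))) u' := by
    intro r b q u u' hu1 hu1' hu hu' hlt
    have he1 := hblock r q (p u) hu1
    have he1' := hblock r q (p u') hu1'
    show mix (fun v => (min (p v) (ν r (p v))).val)
        (fun v => Gp (min (p v) (ν r (p v))) (max (p v) (ν r (p v))) b v) u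
      < mix (fun v => (min (p v) (ν r (p v))).val)
        (fun v => Gp (min (p v) (ν r (p v))) (max (p v) (ν r (p v))) b v) u'
    refine (mix_lt_iff_of_eq ?_).mpr ?_
    · show (min (p u) (ν r (p u))).val = (min (p u') (ν r (p u'))).val
      rw [he1.1, he1'.1]
    · show Gp (min (p u) (ν r (p u))) (max (p u) (ν r (p u))) b u
        < Gp (min (p u') (ν r (p u'))) (max (p u') (ν r (p u'))) b u'
      rw [he1.1, he1.2, he1'.1, he1'.2,
        hGpval _ _ (hminne r q) b u hu, hGpval _ _ (hminne r q) b u' hu']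
      exact hlt
  have hB_cl : ∀ (r : ZMod (k-1)) (b : Fin t) (u u' : V),
      (min (p u) (ν r (p u))).val < (min (p u') (ν r (p u'))).val →
      F (Sum.inr (Sum.inl (r, b))) u < F (Sum.inr (Sum.inl (r, b))) u' := by
    intro r b u u' hlt
    show mix (fun v => (min (p v) (ν r (p v))).val)
        (fun v => Gp (min (p v) (ν r (p v))) (max (p v) (ν r (p v))) b v) u
      < mix (fun v => (min (p v) (ν r (p v))).val)
        (fun v => Gp (min (p v) (ν r (p v))) (max (p v) (ν r (p v))) b v) u'
    exact mix_lt_of_lt hlt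
  have hC_cl : ∀ (c : Fin M) (u u' : V), σ c (p u) < σ c (p u') →
      F (Sum.inr (Sum.inr c)) u < F (Sum.inr (Sum.inr c)) u' := by
    intro c u u' hlt
    show mix (fun v => σ c (p v)) (fun v => ((Fintype.equivFin V) v : ℕ)) u
      < mix (fun v => σ c (p v)) (fun v => ((Fintype.equivFin V) v : ℕ)) u'
    exact mix_lt_of_lt hlt
  have hsne : ∀ {S : Set V} (u u' : V) (hu : u ∈ S) (hu' : u' ∈ S), u ≠ u' →
      (⟨u, hu⟩ : ↥S) ≠ ⟨u', hu'⟩ :=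
    fun u u' hu hu' hne hc => hne (congrArg Subtype.val hc)
  -- obligations
  have h1 : ∀ idx, Function.Injective (F idx) := by
    rintro (⟨a, dir⟩ | ⟨r, b⟩ | c)
    · cases dir
      · show Function.Injective (mix (fun v => k - 1 - (p v).val) (fun v => Fp (p v) a v))
        apply mix_inj
        intro u u' hc hd
        have hc' : k - 1 - (p u).val = k - 1 - (p u').val := hc
        have hpuu : p u = p u' := by
          have h1 := (p u).isLt
          have h2 := (p u').isLt
          exact Fin.ext (by omega)
        have hd' : Fp (p u) a u = Fp (p u') a u' := hd
        rw [hpuu] at hd'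
        rw [hFpval (p u') a u (by rw [← hpuu]; exact hp u), hFpval (p u') a u' (hp u')] at hd'
        exact congrArg Subtype.val (((hf (p u')).1.1 a) hd')
      · show Function.Injective (mix (fun v => (p v).val) (fun v => Fp (p v) a v))
        apply mix_inj
        intro u u' hc hd
        have hc' : (p u).val = (p u').val := hc
        have hpuu : p u = p u' := Fin.ext hc'
        have hd' : Fp (p u) a u = Fp (p u') a u' := hd
        rw [hpuu] at hd'
        rw [hFpval (p u') a u (by rw [← hpuu]; exact hp u), hFpval (p u') a u' (hp u')] at hd'
        exact congrArg Subtype.val (((hf (p u')).1.1 a) hd')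
    · show Function.Injective (mix (fun v => (min (p v) (ν r (p v))).val)
        (fun v => Gp (min (p v) (ν r (p v))) (max (p v) (ν r (p v))) b v))
      apply mix_inj
      intro u u' hc hd
      have hc' : (min (p u) (ν r (p u))).val = (min (p u') (ν r (p u'))).val := hc
      have hmins : min (p u) (ν r (p u)) = min (p u') (ν r (p u')) := Fin.ext hc'
      have hu1 : p u = p u' ∨ p u = ν r (p u') := hsameblock r (p u') (p u) hmins
      have he1 := hblock r (p u') (p u) hu1
      have hd' : Gp (min (p u) (ν r (p u))) (max (p u) (ν r (p u))) b u
          = Gp (min (p u') (ν r (p u'))) (max (p u') (ν r (p u'))) b u' := hd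
      rw [he1.1, he1.2] at hd'
      have hmu : u ∈ P (min (p u') (ν r (p u'))) ∪ P (max (p u') (ν r (p u'))) :=
        hmemB r (p u') u hu1
      have hmu' : u' ∈ P (min (p u') (ν r (p u'))) ∪ P (max (p u') (ν r (p u'))) :=
        hmemB r (p u') u' (Or.inl rfl)
      rw [hGpval _ _ (hminne r (p u')) b u hmu, hGpval _ _ (hminne r (p u')) b u' hmu'] at hd'
      exact congrArg Subtype.val (((hg _ _ (hminne r (p u'))).1.1 b) hd')
    · show Function.Injective (mix (fun v => σ c (p v)) (fun v => ((Fintype.equivFin V) v : ℕ)))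
      apply mix_inj
      intro u u' _ hd
      have hd' : ((Fintype.equivFin V) u : ℕ) = ((Fintype.equivFin V) u' : ℕ) := hd
      exact (Fintype.equivFin V).injective (Fin.val_injective hd')
  -- separation, first edge within a part
  have keyW : ∀ (v w x y : V), G.Adj v w → G.Adj x y → v ≠ x → v ≠ y → w ≠ x → w ≠ y →
      p v = p w → ∃ idx, Separates (F idx) v w x y := by
    intro v w x y hvw hxy d1 d2 d3 d4 hvwp
    have hWm : w ∈ P (p v) := by rw [hvwp]; exact hp w
    have hadj1 : (G.induce (P (p v))).Adj ⟨v, hp v⟩ ⟨w, hWm⟩ := by simpa using hvw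
    by_cases hxyp : p x = p y
    · by_cases hxv : p x = p v
      · have hXm : x ∈ P (p v) := by rw [← hxv]; exact hp x
        have hyv : p y = p v := hxyp.symm.trans hxv
        have hYm : y ∈ P (p v) := by rw [← hyv]; exact hp y
        have hadj2 : (G.induce (P (p v))).Adj ⟨x, hXm⟩ ⟨y, hYm⟩ := by simpa using hxy
        obtain ⟨a, ha⟩ := (hf (p v)).1.2 hadj1 hadj2 (hsne v x (hp v) hXm d1)
          (hsne v y (hp v) hYm d2) (hsne w x hWm hXm d3) (hsne w y hWm hYm d4)
        refine ⟨Sum.inl (a, true), ?_⟩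
        rcases ha with ⟨q1, q2, q3, q4⟩ | ⟨q1, q2, q3, q4⟩
        · exact Or.inl ⟨hA_in a (p v) v x (hp v) hXm q1, hA_in a (p v) v y (hp v) hYm q2,
            hA_in a (p v) w x hWm hXm q3, hA_in a (p v) w y hWm hYm q4⟩
        · exact Or.inr ⟨hA_in a (p v) x v hXm (hp v) q1, hA_in a (p v) x w hXm hWm q2,
            hA_in a (p v) y v hYm (hp v) q3, hA_in a (p v) y w hYm hWm q4⟩
      · have hne : (p v).val ≠ (p x).val := fun h => hxv (Fin.ext h.symm)
        rcases Nat.lt_or_ge (p v).val (p x).val with hlt | hge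
        · exact ⟨Sum.inl (⟨0, by omega⟩, true), Or.inl ⟨hA_cl _ v x hlt,
            hA_cl _ v y (by rw [← hxyp]; exact hlt), hA_cl _ w x (by rw [← hvwp]; exact hlt),
            hA_cl _ w y (by rw [← hvwp, ← hxyp]; exact hlt)⟩⟩
        · have hgt : (p x).val < (p v).val := by omega
          exact ⟨Sum.inl (⟨0, by omega⟩, true), Or.inr ⟨hA_cl _ x v hgt,
            hA_cl _ x w (by rw [← hvwp]; exact hgt), hA_cl _ y v (by rw [← hxyp]; exact hgt),
            hA_cl _ y w (by rw [← hxyp, ← hvwp]; exact hgt)⟩⟩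
    · by_cases hxl : p v = p x
      · have hXm : x ∈ P (p v) := by rw [hxl]; exact hp x
        obtain ⟨⟨a1, ha1⟩, ⟨a2, ha2⟩⟩ := (hf (p v)).2 hadj1
          (hsne x v hXm (hp v) (Ne.symm d1)) (hsne x w hXm hWm (Ne.symm d3))
        have hyne : (p y).val ≠ (p v).val := by
          intro h
          exact hxyp (hxl.symm.trans (Fin.ext h).symm)
        rcases Nat.lt_or_ge (p y).val (p v).val with hlt | hge
        · exact ⟨Sum.inl (a1, true), Or.inr ⟨hA_in a1 (p v) x v hXm (hp v) ha1.1,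
            hA_in a1 (p v) x w hXm hWm ha1.2, hA_cl a1 y v hlt,
            hA_cl a1 y w (by rw [← hvwp]; exact hlt)⟩⟩
        · have hgt : (p v).val < (p y).val := by omega
          exact ⟨Sum.inl (a2, true), Or.inl ⟨hA_in a2 (p v) v x (hp v) hXm ha2.1,
            hA_cl a2 v y hgt, hA_in a2 (p v) w x hWm hXm ha2.2,
            hA_cl a2 w y (by rw [← hvwp]; exact hgt)⟩⟩
      · by_cases hyl : p v = p y
        · have hYm : y ∈ P (p v) := by rw [hyl]; exact hp y
          obtain ⟨⟨a1, ha1⟩, ⟨a2, ha2⟩⟩ := (hf (p v)).2 hadj1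
            (hsne y v hYm (hp v) (Ne.symm d2)) (hsne y w hYm hWm (Ne.symm d4))
          have hxne : (p x).val ≠ (p v).val := fun h => hxl (Fin.ext h).symm
          rcases Nat.lt_or_ge (p x).val (p v).val with hlt | hge
          · exact ⟨Sum.inl (a1, true), sep_swap_right (Or.inr
              ⟨hA_in a1 (p v) y v hYm (hp v) ha1.1, hA_in a1 (p v) y w hYm hWm ha1.2,
               hA_cl a1 x v hlt, hA_cl a1 x w (by rw [← hvwp]; exact hlt)⟩)⟩
          · have hgt : (p v).val < (p x).val := by omega
            exact ⟨Sum.inl (a2, true), sep_swap_right (Or.inl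
              ⟨hA_in a2 (p v) v y (hp v) hYm ha2.1, hA_cl a2 v x hgt,
               hA_in a2 (p v) w y hWm hYm ha2.2, hA_cl a2 w x (by rw [← hvwp]; exact hgt)⟩)⟩
        · obtain ⟨r, hr⟩ := hνcomp (p x) (p y) hxyp
          have hby : p y = p x ∨ p y = ν r (p x) := Or.inr hr.symm
          have hey := (hblock r (p x) (p y) hby).1
          have hew := (hblock r (p v) (p w) (Or.inl hvwp.symm)).1
          have hnec : min (p v) (ν r (p v)) ≠ min (p x) (ν r (p x)) := by
            intro hc
            rcases hsameblock r (p x) (p v) hc with h | h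
            · exact hxl h
            · rw [hr] at h
              exact hyl h
          have hnecv : (min (p v) (ν r (p v))).val ≠ (min (p x) (ν r (p x))).val :=
            fun h => hnec (Fin.ext h)
          rcases Nat.lt_or_ge (min (p v) (ν r (p v))).val (min (p x) (ν r (p x))).val
            with hlt | hge
          · exact ⟨Sum.inr (Sum.inl (r, ⟨0, by omega⟩)), Or.inl ⟨hB_cl _ _ v x hlt,
              hB_cl _ _ v y (by rw [hey]; exact hlt), hB_cl _ _ w x (by rw [hew]; exact hlt),
              hB_cl _ _ w y (by rw [hew, hey]; exact hlt)⟩⟩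
          · have hgt : (min (p x) (ν r (p x))).val < (min (p v) (ν r (p v))).val := by omega
            exact ⟨Sum.inr (Sum.inl (r, ⟨0, by omega⟩)), Or.inr ⟨hB_cl _ _ x v hgt,
              hB_cl _ _ x w (by rw [hew]; exact hgt), hB_cl _ _ y v (by rw [hey]; exact hgt),
              hB_cl _ _ y w (by rw [hey, hew]; exact hgt)⟩⟩
  -- separation, both cross, x sharing a part with the first edge, y not
  have keyX : ∀ (v w x y : V), G.Adj v w → G.Adj x y → v ≠ x → v ≠ y → w ≠ x → w ≠ y →
      p v ≠ p w → (p x = p v ∨ p x = p w) → p y ≠ p v → p y ≠ p w →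
      ∃ idx, Separates (F idx) v w x y := by
    intro v w x y hvw hxy d1 d2 d3 d4 hvwp hxin hy1 hy2
    obtain ⟨r, hr⟩ := hνcomp (p v) (p w) hvwp
    have hbv : p v = p v ∨ p v = ν r (p v) := Or.inl rfl
    have hbw : p w = p v ∨ p w = ν r (p v) := Or.inr hr.symm
    have hbx : p x = p v ∨ p x = ν r (p v) := by
      rcases hxin with h | h
      · exact Or.inl h
      · exact Or.inr (by rw [hr]; exact h)
    have hmv := hmemB r (p v) v hbv
    have hmw := hmemB r (p v) w hbw
    have hmx := hmemB r (p v) x hbx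
    have hadj := hcrossAdj _ _ v w hmv hmw hvw (by
      rcases hor_of r (p v) (p w) hr.symm with h | h
      · exact Or.inl h
      · exact Or.inr h)
    obtain ⟨⟨b1, hb1⟩, ⟨b2, hb2⟩⟩ := (hg _ _ (hminne r (p v))).2 hadj
      (hsne x v hmx hmv (Ne.symm d1)) (hsne x w hmx hmw (Ne.symm d3))
    have hney : min (p y) (ν r (p y)) ≠ min (p v) (ν r (p v)) := by
      intro hc
      rcases hsameblock r (p v) (p y) hc with h | h
      · exact hy1 h
      · rw [hr] at h
        exact hy2 h
    have hneyv : (min (p y) (ν r (p y))).val ≠ (min (p v) (ν r (p v))).val :=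
      fun h => hney (Fin.ext h)
    have hewc := (hblock r (p v) (p w) hbw).1
    rcases Nat.lt_or_ge (min (p y) (ν r (p y))).val (min (p v) (ν r (p v))).val with hlt | hge
    · exact ⟨Sum.inr (Sum.inl (r, b1)), Or.inr ⟨hB_in r b1 (p v) x v hbx hbv hmx hmv hb1.1,
        hB_in r b1 (p v) x w hbx hbw hmx hmw hb1.2, hB_cl r b1 y v hlt,
        hB_cl r b1 y w (by rw [hewc]; exact hlt)⟩⟩
    · have hgt : (min (p v) (ν r (p v))).val < (min (p y) (ν r (p y))).val := by omega
      exact ⟨Sum.inr (Sum.inl (r, b2)), Or.inl ⟨hB_in r b2 (p v) v x hbv hbx hmv hmx hb2.1,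
        hB_cl r b2 v y hgt, hB_in r b2 (p v) w x hbw hbx hmw hmx hb2.2,
        hB_cl r b2 w y (by rw [hewc]; exact hgt)⟩⟩
  have h2 : ∀ ⦃v w x y : V⦄, G.Adj v w → G.Adj x y → v ≠ x → v ≠ y → w ≠ x → w ≠ y →
      ∃ idx, Separates (F idx) v w x y := by
    intro v w x y hvw hxy d1 d2 d3 d4
    by_cases hvwp : p v = p w
    · exact keyW v w x y hvw hxy d1 d2 d3 d4 hvwp
    · by_cases hxyp : p x = p y
      · obtain ⟨idx, hidx⟩ := keyW x y v w hxy hvw (Ne.symm d1) (Ne.symm d3)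
          (Ne.symm d2) (Ne.symm d4) hxyp
        exact ⟨idx, sep_swap_pairs hidx⟩
      · by_cases hsame : (p x = p v ∧ p y = p w) ∨ (p x = p w ∧ p y = p v)
        · obtain ⟨r, hr⟩ := hνcomp (p v) (p w) hvwp
          have hbv : p v = p v ∨ p v = ν r (p v) := Or.inl rfl
          have hbw : p w = p v ∨ p w = ν r (p v) := Or.inr hr.symm
          have hbx : p x = p v ∨ p x = ν r (p v) := by
            rcases hsame with h | h
            · exact Or.inl h.1
            · exact Or.inr (by rw [hr]; exact h.1)
          have hby : p y = p v ∨ p y = ν r (p v) := by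
            rcases hsame with h | h
            · exact Or.inr (by rw [hr]; exact h.2)
            · exact Or.inl h.2
          have hmv := hmemB r (p v) v hbv
          have hmw := hmemB r (p v) w hbw
          have hmx := hmemB r (p v) x hbx
          have hmy := hmemB r (p v) y hby
          have hadj1 := hcrossAdj _ _ v w hmv hmw hvw (by
            rcases hor_of r (p v) (p w) hr.symm with h | h
            · exact Or.inl h
            · exact Or.inr h)
          have hadj2 := hcrossAdj _ _ x y hmx hmy hxy (by
            rcases hsame with ⟨e1, e2⟩ | ⟨e1, e2⟩ <;>
              rcases hor_of r (p v) (p w) hr.symm with ⟨f1, f2⟩ | ⟨f1, f2⟩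
            · exact Or.inl ⟨e1.trans f1, e2.trans f2⟩
            · exact Or.inr ⟨e1.trans f1, e2.trans f2⟩
            · exact Or.inr ⟨e1.trans f2, e2.trans f1⟩
            · exact Or.inl ⟨e1.trans f2, e2.trans f1⟩)
          obtain ⟨b, hb⟩ := (hg _ _ (hminne r (p v))).1.2 hadj1 hadj2
            (hsne v x hmv hmx d1) (hsne v y hmv hmy d2)
            (hsne w x hmw hmx d3) (hsne w y hmw hmy d4)
          refine ⟨Sum.inr (Sum.inl (r, b)), ?_⟩
          rcases hb with ⟨q1, q2, q3, q4⟩ | ⟨q1, q2, q3, q4⟩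
          · exact Or.inl ⟨hB_in r b (p v) v x hbv hbx hmv hmx q1,
              hB_in r b (p v) v y hbv hby hmv hmy q2,
              hB_in r b (p v) w x hbw hbx hmw hmx q3,
              hB_in r b (p v) w y hbw hby hmw hmy q4⟩
          · exact Or.inr ⟨hB_in r b (p v) x v hbx hbv hmx hmv q1,
              hB_in r b (p v) x w hbx hbw hmx hmw q2,
              hB_in r b (p v) y v hby hbv hmy hmv q3,
              hB_in r b (p v) y w hby hbw hmy hmw q4⟩
        · by_cases hshx : p x = p v ∨ p x = p w
          · have hy1 : p y ≠ p v := by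
              intro h
              rcases hshx with h' | h'
              · exact hxyp (h'.trans h.symm)
              · exact hsame (Or.inr ⟨h', h⟩)
            have hy2 : p y ≠ p w := by
              intro h
              rcases hshx with h' | h'
              · exact hsame (Or.inl ⟨h', h⟩)
              · exact hxyp (h'.trans h.symm)
            exact keyX v w x y hvw hxy d1 d2 d3 d4 hvwp hshx hy1 hy2
          · by_cases hshy : p y = p v ∨ p y = p w
            · push_neg at hshx
              obtain ⟨idx, hidx⟩ := keyX v w y x hvw hxy.symm d2 d1 d4 d3 hvwp hshy
                hshx.1 hshx.2
              exact ⟨idx, sep_swap_right hidx⟩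
            · push_neg at hshx hshy
              obtain ⟨c, hc⟩ := hσ4 (p v) (p w) (p x) (p y) hvwp (Ne.symm hshx.1)
                (Ne.symm hshy.1) (Ne.symm hshx.2) (Ne.symm hshy.2) hxyp
              refine ⟨Sum.inr (Sum.inr c), ?_⟩
              rcases hc with ⟨q1, q2, q3, q4⟩ | ⟨q1, q2, q3, q4⟩
              · exact Or.inl ⟨hC_cl c v x q1, hC_cl c v y q2, hC_cl c w x q3, hC_cl c w y q4⟩
              · exact Or.inr ⟨hC_cl c x v q1, hC_cl c x w q2, hC_cl c y v q3, hC_cl c y w q4⟩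
  have h3 : ∀ ⦃v w x : V⦄, G.Adj v w → x ≠ v → x ≠ w →
      (∃ idx, F idx x < F idx v ∧ F idx x < F idx w) ∧
      (∃ idx, F idx v < F idx x ∧ F idx w < F idx x) := by
    intro v w x hvw d1 d2
    by_cases hvwp : p v = p w
    · have hWm : w ∈ P (p v) := by rw [hvwp]; exact hp w
      have hadj : (G.induce (P (p v))).Adj ⟨v, hp v⟩ ⟨w, hWm⟩ := by simpa using hvw
      by_cases hxv : p x = p v
      · have hXm : x ∈ P (p v) := by rw [← hxv]; exact hp x
        obtain ⟨⟨a1, ha1⟩, ⟨a2, ha2⟩⟩ := (hf (p v)).2 hadj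
          (hsne x v hXm (hp v) d1) (hsne x w hXm hWm d2)
        exact ⟨⟨Sum.inl (a1, true), hA_in a1 (p v) x v hXm (hp v) ha1.1,
            hA_in a1 (p v) x w hXm hWm ha1.2⟩,
          ⟨Sum.inl (a2, true), hA_in a2 (p v) v x (hp v) hXm ha2.1,
            hA_in a2 (p v) w x hWm hXm ha2.2⟩⟩
      · have hne : (p x).val ≠ (p v).val := fun h => hxv (Fin.ext h)
        rcases Nat.lt_or_ge (p x).val (p v).val with hlt | hge
        · exact ⟨⟨Sum.inl (⟨0, by omega⟩, true), hA_cl _ x v hlt,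
              hA_cl _ x w (by rw [← hvwp]; exact hlt)⟩,
            ⟨Sum.inl (⟨0, by omega⟩, false), hA_cl' _ v x hlt,
              hA_cl' _ w x (by rw [← hvwp]; exact hlt)⟩⟩
        · have hgt : (p v).val < (p x).val := by omega
          exact ⟨⟨Sum.inl (⟨0, by omega⟩, false), hA_cl' _ x v hgt,
              hA_cl' _ x w (by rw [← hvwp]; exact hgt)⟩,
            ⟨Sum.inl (⟨0, by omega⟩, true), hA_cl _ v x hgt,
              hA_cl _ w x (by rw [← hvwp]; exact hgt)⟩⟩
    · obtain ⟨r, hr⟩ := hνcomp (p v) (p w) hvwp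
      have hbv : p v = p v ∨ p v = ν r (p v) := Or.inl rfl
      have hbw : p w = p v ∨ p w = ν r (p v) := Or.inr hr.symm
      have hmv := hmemB r (p v) v hbv
      have hmw := hmemB r (p v) w hbw
      have hadj := hcrossAdj _ _ v w hmv hmw hvw (by
        rcases hor_of r (p v) (p w) hr.symm with h | h
        · exact Or.inl h
        · exact Or.inr h)
      by_cases hxin : p x = p v ∨ p x = ν r (p v)
      · have hmx := hmemB r (p v) x hxin
        obtain ⟨⟨b1, hb1⟩, ⟨b2, hb2⟩⟩ := (hg _ _ (hminne r (p v))).2 hadj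
          (hsne x v hmx hmv d1) (hsne x w hmx hmw d2)
        exact ⟨⟨Sum.inr (Sum.inl (r, b1)), hB_in r b1 (p v) x v hxin hbv hmx hmv hb1.1,
            hB_in r b1 (p v) x w hxin hbw hmx hmw hb1.2⟩,
          ⟨Sum.inr (Sum.inl (r, b2)), hB_in r b2 (p v) v x hbv hxin hmv hmx hb2.1,
            hB_in r b2 (p v) w x hbw hxin hmw hmx hb2.2⟩⟩
      · push_neg at hxin
        have hx1 : p x ≠ p v := hxin.1
        have hx2 : p x ≠ p w := by rw [← hr]; exact hxin.2
        obtain ⟨⟨c1, hc1⟩, ⟨c2, hc2⟩⟩ := hσ3 (p v) (p w) (p x) hvwp hx1 hx2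
        exact ⟨⟨Sum.inr (Sum.inr c1), hC_cl c1 x v hc1.1, hC_cl c1 x w hc1.2⟩,
          ⟨Sum.inr (Sum.inr c2), hC_cl c2 v x hc2.1, hC_cl c2 w x hc2.2⟩⟩
  obtain ⟨F', hF'⟩ := isStrongSepRep_of_index F h1 h2 h3
  have hIcard : Fintype.card ((Fin s × Bool) ⊕ ((ZMod (k-1) × Fin t) ⊕ Fin M))
      = 2 * s + ((k-1) * t + M) := by
    simp [Fintype.card_sum, Fintype.card_prod, ZMod.card]
    ring
  have hdim : strongSepDim G ≤ 2 * s + ((k-1) * t + M) := by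
    rw [← hIcard]
    apply Nat.sInf_le
    exact ⟨by rw [hIcard]; omega, F', hF'⟩
  have hcastle : (strongSepDim G : ℝ) ≤ ((2 * s + ((k-1) * t + M) : ℕ) : ℝ) := by
    exact_mod_cast hdim
  have hk1 : (1:ℕ) ≤ k := by omega
  push_cast [Nat.cast_sub hk1] at hcastle
  linarith [hMle]
end

section
/- Let G be a bipartite graph with bipartition (A,B) and minimum degree at least 3, admitting a 3-dimensional consistent separating representation {<_1,<_2,<_3} that is A-homogeneous with signs a_1=a_2=a_3=1. Then a contradiction follows; i.e., no such graph exists. (Equivalently: if a bipartite graph has a consistent separating representation with three orderings that all agree with each vertex's neighbourhood ordering, then some vertex of A or B has degree at most 2.) -/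
/-!
Pick `v ∈ A` with neighbours `b, c`. Homogeneity makes every ordering put `b` before `c`, and
consistency puts `v` before `b`, so `v <ᵢ b <ᵢ c` in all three orderings. Then the edge `vc` is
not separated from any edge `xb` disjoint from it: `b` lies strictly between the endpoints of
`vc` in every ordering. Minimum degree 3 provides such an `x`.
-/

theorem SimpleGraph.exists_adj_notMem_of_card_lt_degree {V : Type*} (G : SimpleGraph V) {v : V}
    [Fintype (G.neighborSet v)] (s : Finset V) (h : s.card < G.degree v) :
    ∃ w, G.Adj v w ∧ w ∉ s := by
  rw [← G.card_neighborFinset_eq_degree] at h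
  obtain ⟨w, hw, hws⟩ := Finset.exists_mem_notMem_of_card_lt_card h
  exact ⟨w, (G.mem_neighborFinset v w).1 hw, hws⟩

theorem SimpleGraph.exists_adj_adj_lt_of_two_le_degree {V α : Type*} [LinearOrder α]
    (G : SimpleGraph V) {v : V} [Fintype (G.neighborSet v)] {g : V → α}
    (hg : Function.Injective g) (h : 2 ≤ G.degree v) :
    ∃ b c, G.Adj v b ∧ G.Adj v c ∧ g b < g c := by
  obtain ⟨b, hvb, -⟩ :=
    G.exists_adj_notMem_of_card_lt_degree (v := v) ∅ (by rw [Finset.card_empty]; omega)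
  obtain ⟨c, hvc, hcb⟩ :=
    G.exists_adj_notMem_of_card_lt_degree (v := v) {b} (by rw [Finset.card_singleton]; omega)
  rcases lt_or_gt_of_ne (hg.ne (Finset.notMem_singleton.1 hcb)) with hcb | hbc
  · exact ⟨c, b, hvc, hvb, hcb⟩
  · exact ⟨b, c, hvb, hvc, hbc⟩

theorem not_separates_of_lt_of_lt {V : Type*} {f : V → ℕ} {v b c : V} (x : V)
    (hvb : f v < f b) (hbc : f b < f c) : ¬ Separates f v c x b := by
  rintro (⟨-, -, -, hcb⟩ | ⟨-, -, hbv, -⟩) <;> omega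

theorem no_homogeneous_all_positive_general {V : Type*} [Fintype V] [Nonempty V] [DecidableEq V]
    (G : SimpleGraph V) [DecidableRel G.Adj] (A B : Set V)
    (hdisj : Disjoint A B)
    (hbip : ∀ v w : V, G.Adj v w → (v ∈ A ∧ w ∈ B) ∨ (v ∈ B ∧ w ∈ A))
    (hmindeg : ∀ v, 3 ≤ G.degree v)
    (f : Fin 3 → V → ℕ) (hrep : IsSepRep G f)
    (hcons : ∀ v w : V, G.Adj v w → v ∈ A → w ∈ B → ∀ i, f i v < f i w)
    (hhomog : ∀ v ∈ A, ∀ (i : Fin 3) (w x : V), G.Adj v w → G.Adj v x →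
      (f i w < f i x ↔ f 0 w < f 0 x)) :
    False := by
  obtain ⟨u⟩ := ‹Nonempty V›
  obtain ⟨w, huw, -⟩ :=
    G.exists_adj_notMem_of_card_lt_degree (v := u) ∅
      (by rw [Finset.card_empty]; linarith [hmindeg u])
  obtain ⟨v, hvA⟩ : ∃ v, v ∈ A :=
    (hbip u w huw).elim (fun h => ⟨u, h.1⟩) (fun h => ⟨w, h.2⟩)
  obtain ⟨b, c, hvb, hvc, hbc⟩ :=
    G.exists_adj_adj_lt_of_two_le_degree (hrep.1 0) (by linarith [hmindeg v])
  obtain ⟨x, hbx, hx⟩ :=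
    G.exists_adj_notMem_of_card_lt_degree {v, c} (Finset.card_le_two.trans_lt (hmindeg b))
  obtain ⟨hxv, hxc⟩ : x ≠ v ∧ x ≠ c := by
    simpa only [Finset.mem_insert, Finset.mem_singleton, not_or] using hx
  have hbB : b ∈ B := ((hbip v b hvb).resolve_right fun h => Set.disjoint_left.1 hdisj hvA h.1).2
  obtain ⟨i, hsep⟩ := hrep.2 hvc hbx.symm hxv.symm (G.ne_of_adj hvb) hxc.symm
    (fun h => hbc.ne (congrArg (f 0) h).symm)
  exact not_separates_of_lt_of_lt x (hcons v b hvb hvA hbB i)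
    ((hhomog v hvA i b c hvb hvc).2 hbc) hsep

/-- No bipartite graph with bipartition `(A, B)` and minimum degree at least 3 admits a
3-dimensional consistent separating representation that is `A`-homogeneous with all three
signs `+1` (i.e. all three orderings restrict to the same order on each neighbourhood
`N(v)`, `v ∈ A`). -/
theorem no_homogeneous_all_positive {V : Type*} [Fintype V] [Nonempty V] [DecidableEq V]
    (G : SimpleGraph V) [DecidableRel G.Adj] (A B : Set V)
    (hdisj : Disjoint A B) (hcover : A ∪ B = Set.univ)
    (hbip : ∀ v w : V, G.Adj v w → (v ∈ A ∧ w ∈ B) ∨ (v ∈ B ∧ w ∈ A))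
    (hmindeg : ∀ v, 3 ≤ G.degree v)
    (f : Fin 3 → V → ℕ) (hrep : IsSepRep G f)
    (hcons : ∀ v w : V, G.Adj v w → v ∈ A → w ∈ B → ∀ i, f i v < f i w)
    (hhomog : ∀ v ∈ A, ∀ (i : Fin 3) (w x : V), G.Adj v w → G.Adj v x →
      (f i w < f i x ↔ f 0 w < f 0 x)) :
    False :=
  no_homogeneous_all_positive_general G A B hdisj hbip hmindeg f hrep hcons hhomog
end

section
/- Let G be a bipartite graph with bipartition (A,B) and minimum degree at least 4, admitting a 3-dimensional consistent separating representation {<_1,<_2,<_3} that is A-homogeneous. Then a contradiction follows; i.e., no such graph exists. -/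
/-!
Two of the three signs of the homogeneous representation agree, say all signs except the one
of `<ₖ`; then every `v ∈ A` has a neighbour `u` that is last among `N(v)` in all orderings other
than `<ₖ`. Take another neighbour `w` of `v` and another neighbour `v'` of `w`. Some ordering
separates `vu` from `wv'`; by consistency `v <ᵢ w`, so it must put `v, u` before `w, v'`, and
since `w` precedes `u` in every ordering but `<ₖ`, that ordering is `<ₖ`. Hence every `v ∈ A`
is followed in `<ₖ` by some `v' ∈ A`, which is absurd for a `<ₖ`-last vertex of `A`.
-/

open Function

lemma Fin.exists_forall_ne_eq_of_bool (a : Fin 3 → Bool) :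
    ∃ k ℓ : Fin 3, ∀ i ≠ k, a i = a ℓ := by
  revert a
  decide

lemma lt_iff_lt_of_sign_eq {α ι : Type*} {f : ι → α → ℕ} {r : α → ℕ} {a : ι → Bool} {w x : α}
    (h : ∀ i, (a i = true → (f i w < f i x ↔ r w < r x)) ∧
      (a i = false → (f i w < f i x ↔ r x < r w)))
    {i j : ι} (hij : a i = a j) : f i w < f i x ↔ f j w < f j x := by
  cases hj : a j
  · rw [(h i).2 (hij.trans hj), (h j).2 hj]
  · rw [(h i).1 (hij.trans hj), (h j).1 hj]

lemma lt_of_separates_of_lt {α ι : Type*} {f : ι → α → ℕ} {k : ι} {v u w v' : α}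
    (hsep : ∃ i, Separates (f i) v u v' w) (hvw : ∀ i, f i v < f i w)
    (hwu : ∀ i ≠ k, f i w < f i u) : f k v < f k v' := by
  obtain ⟨i, ⟨hvv', -, -, huw⟩ | ⟨-, -, hwv, -⟩⟩ := hsep
  · obtain rfl : i = k := by
      by_contra hik
      exact (hwu i hik).not_gt huw
    exact hvv'
  · exact absurd (hvw i) hwv.not_gt

namespace SimpleGraph

variable {V : Type*} (G : SimpleGraph V)

lemma exists_adj_ne_of_two_le_degree {v : V} [Fintype (G.neighborSet v)]
    (h : 2 ≤ G.degree v) (u : V) : ∃ w, G.Adj v w ∧ w ≠ u := by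
  rw [← card_neighborFinset_eq_degree] at h
  obtain ⟨w, hw, hwu⟩ := Finset.exists_mem_ne h u
  exact ⟨w, (G.mem_neighborFinset v w).1 hw, hwu⟩

lemma exists_adj_forall_adj_ne_lt {ι : Type*} {f : ι → V → ℕ} {v : V}
    [Fintype (G.neighborSet v)] (hv : 0 < G.degree v) {j : ι} (hj : Injective (f j))
    {I : Set ι} (hagree : ∀ i ∈ I, ∀ w x, G.Adj v w → G.Adj v x →
      (f i w < f i x ↔ f j w < f j x)) :
    ∃ u, G.Adj v u ∧ ∀ w, G.Adj v w → w ≠ u → ∀ i ∈ I, f i w < f i u := by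
  obtain ⟨u, hu, hmax⟩ := Set.exists_max_image _ (f j) (G.neighborSet v).toFinite
    (G.degree_pos_iff_nonempty.1 hv)
  refine ⟨u, hu, fun w hw hwu i hi => (hagree i hi w u hw hu).2 ?_⟩
  exact (hmax w hw).lt_of_ne (hj.ne hwu)

variable {G} {A B : Set V} (hdisj : Disjoint A B)
  (hbip : ∀ v w : V, G.Adj v w → (v ∈ A ∧ w ∈ B) ∨ (v ∈ B ∧ w ∈ A))
include hdisj hbip

lemma mem_right_of_adj_of_mem_left {v w : V} (hvw : G.Adj v w) (hv : v ∈ A) : w ∈ B :=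
  (hbip v w hvw).elim And.right fun h => absurd hv (hdisj.notMem_of_mem_right h.1)

lemma mem_left_of_adj_of_mem_right {v w : V} (hvw : G.Adj v w) (hv : v ∈ B) : w ∈ A :=
  (hbip v w hvw).elim (fun h => absurd hv (hdisj.notMem_of_mem_left h.1)) And.right

lemma exists_lt_of_adj_forall_adj_ne_lt [G.LocallyFinite] (hdeg : ∀ x, 2 ≤ G.degree x)
    {k : ℕ} {f : Fin k → V → ℕ} (hrep : IsSepRep G f)
    (hcons : ∀ v w : V, G.Adj v w → v ∈ A → w ∈ B → ∀ i, f i v < f i w)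
    {i₀ : Fin k} {v u : V} (hv : v ∈ A) (hvu : G.Adj v u)
    (hu : ∀ w, G.Adj v w → w ≠ u → ∀ i ≠ i₀, f i w < f i u) :
    ∃ v' ∈ A, f i₀ v < f i₀ v' := by
  obtain ⟨w, hvw, hwu⟩ := G.exists_adj_ne_of_two_le_degree (hdeg v) u
  obtain ⟨v', hwv', hv'v⟩ := G.exists_adj_ne_of_two_le_degree (hdeg w) v
  have hwB : w ∈ B := mem_right_of_adj_of_mem_left hdisj hbip hvw hv
  have huB : u ∈ B := mem_right_of_adj_of_mem_left hdisj hbip hvu hv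
  have hv'A : v' ∈ A := mem_left_of_adj_of_mem_right hdisj hbip hwv' hwB
  have hsep := hrep.2 hvu hwv'.symm (Ne.symm hv'v) (hdisj.ne_of_mem hv hwB)
    (hdisj.ne_of_mem hv'A huB).symm hwu.symm
  exact ⟨v', hv'A, lt_of_separates_of_lt hsep (hcons v w hvw hv hwB) (hu w hvw hwu)⟩

end SimpleGraph

theorem no_homogeneous_min_degree_four_general {V : Type*} [Fintype V] [Nonempty V]
    (G : SimpleGraph V) [DecidableRel G.Adj] (A B : Set V)
    (hdisj : Disjoint A B)
    (hbip : ∀ v w : V, G.Adj v w → (v ∈ A ∧ w ∈ B) ∨ (v ∈ B ∧ w ∈ A))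
    (hmindeg : ∀ v, 4 ≤ G.degree v)
    (f : Fin 3 → V → ℕ) (hrep : IsSepRep G f)
    (hcons : ∀ v w : V, G.Adj v w → v ∈ A → w ∈ B → ∀ i, f i v < f i w)
    (hhomog : ∃ a : Fin 3 → Bool, ∀ v ∈ A, ∃ r : V → ℕ,
      Set.InjOn r (G.neighborSet v) ∧
      ∀ (i : Fin 3) (w x : V), G.Adj v w → G.Adj v x →
        (a i = true → (f i w < f i x ↔ r w < r x)) ∧
        (a i = false → (f i w < f i x ↔ r x < r w))) :
    False := by
  obtain ⟨a, ha⟩ := hhomog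
  obtain ⟨k, ℓ, hkℓ⟩ := Fin.exists_forall_ne_eq_of_bool a
  have hdeg : ∀ v, 2 ≤ G.degree v := fun v => (hmindeg v).trans' (by norm_num)
  have hstep : ∀ v ∈ A, ∃ v' ∈ A, f k v < f k v' := by
    intro v hv
    obtain ⟨r, -, hr⟩ := ha v hv
    obtain ⟨u, hvu, hu⟩ := G.exists_adj_forall_adj_ne_lt (two_pos.trans_le (hdeg v)) (hrep.1 ℓ)
      (I := {i | i ≠ k}) fun i hi w x hw hx => lt_iff_lt_of_sign_eq (hr · w x hw hx) (hkℓ i hi)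
    exact SimpleGraph.exists_lt_of_adj_forall_adj_ne_lt hdisj hbip hdeg hrep hcons hv hvu hu
  have hA : A.Nonempty := by
    obtain ⟨v⟩ := ‹Nonempty V›
    obtain ⟨w, hvw⟩ := (G.degree_pos_iff_exists_adj v).1 (two_pos.trans_le (hdeg v))
    exact (hbip v w hvw).elim (fun h => ⟨v, h.1⟩) fun h => ⟨w, h.2⟩
  obtain ⟨v, hv, hmax⟩ := Set.exists_max_image A (f k) A.toFinite hA
  obtain ⟨v', hv', hlt⟩ := hstep v hv
  exact (hmax v' hv').not_gt hlt

/-- No bipartite graph with bipartition `(A, B)` and minimum degree at least 4 admits a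
3-dimensional consistent separating representation that is `A`-homogeneous. -/
theorem no_homogeneous_min_degree_four {V : Type*} [Fintype V] [Nonempty V] [DecidableEq V]
    (G : SimpleGraph V) [DecidableRel G.Adj] (A B : Set V)
    (hdisj : Disjoint A B) (hcover : A ∪ B = Set.univ)
    (hbip : ∀ v w : V, G.Adj v w → (v ∈ A ∧ w ∈ B) ∨ (v ∈ B ∧ w ∈ A))
    (hmindeg : ∀ v, 4 ≤ G.degree v)
    (f : Fin 3 → V → ℕ) (hrep : IsSepRep G f)
    (hcons : ∀ v w : V, G.Adj v w → v ∈ A → w ∈ B → ∀ i, f i v < f i w)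
    (hhomog : ∃ a : Fin 3 → Bool, ∀ v ∈ A, ∃ r : V → ℕ,
      Set.InjOn r (G.neighborSet v) ∧
      ∀ (i : Fin 3) (w x : V), G.Adj v w → G.Adj v x →
        (a i = true → (f i w < f i x ↔ r w < r x)) ∧
        (a i = false → (f i w < f i x ↔ r x < r w))) :
    False :=
  no_homogeneous_min_degree_four_general G A B hdisj hbip hmindeg f hrep hcons hhomog
end
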